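/- arXiv:1602.05823 — 9 statements merged into one kernel-verified Lean document; each statement's English description precedes it below -/
import Mathlib

section
/- For any dimension d ≥ 1, if ν ∈ H_s = {ν ∈ ℕ₀^d : ∏_{k=1}^d (ν_k + 1) ≤ s}, then ∏_{k=1}^d (2ν_k + 1) ≤ s^{log 3 / log 2}. -/
/-! Writing `α = log 3 / log 2`, so that `2 ^ α = 3`, it suffices to bound each factor by
`2 * n + 1 ≤ (n + 1) ^ α`: multiplying these bounds gives `(∏ (ν k + 1)) ^ α ≤ s ^ α`.
For `n = 0` both sides equal `1`; for `n ≥ 1`, Bernoulli's inequality gives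
`(n + 1) ^ α = 3 * (1 + (n - 1) / 2) ^ α ≥ 3 * (1 + α * (n - 1) / 2)`,
which is at least `2 * n + 1` because `α ≥ 4 / 3`, i.e. `2 ^ 4 ≤ 3 ^ 3`. -/

open Real

lemma four_div_three_le_logb_two_three : (4 / 3 : ℝ) ≤ logb 2 3 := by
  have h16_le_27 : log (2 ^ 4) ≤ log (3 ^ 3) := log_le_log (by norm_num) (by norm_num)
  rw [log_pow, log_pow] at h16_le_27
  rw [logb, le_div_iff₀ (log_pos one_lt_two)]
  push_cast at h16_le_27
  linarith

lemma two_mul_add_one_le_add_one_rpow_logb {x : ℝ} (hx : 1 ≤ x) :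
    2 * x + 1 ≤ (x + 1) ^ logb 2 3 := by
  have hα := four_div_three_le_logb_two_three
  have bernoulli : 1 + logb 2 3 * ((x - 1) / 2) ≤ (1 + (x - 1) / 2) ^ logb 2 3 :=
    one_add_mul_self_le_rpow_one_add (by linarith) (by linarith)
  calc 2 * x + 1 ≤ 3 * (1 + logb 2 3 * ((x - 1) / 2)) := by nlinarith
    _ ≤ 3 * (1 + (x - 1) / 2) ^ logb 2 3 := by gcongr
    _ = (2 * (1 + (x - 1) / 2)) ^ logb 2 3 := by
      rw [mul_rpow zero_le_two (by linarith), rpow_logb two_pos (by norm_num) three_pos]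
    _ = (x + 1) ^ logb 2 3 := by ring_nf

lemma two_mul_natCast_add_one_le_rpow_logb (n : ℕ) :
    2 * (n : ℝ) + 1 ≤ ((n : ℝ) + 1) ^ logb 2 3 := by
  rcases Nat.eq_zero_or_pos n with rfl | hn
  · simp
  · exact two_mul_add_one_le_add_one_rpow_logb (by exact_mod_cast hn)

theorem hyperbolic_cross_legendre_weight_le_general
    (d s : ℕ) (ν : Fin d → ℕ)
    (hν : ∏ k, (ν k + 1) ≤ s) :
    (∏ k, (2 * (ν k : ℝ) + 1)) ≤ (s : ℝ) ^ (Real.log 3 / Real.log 2) := by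
  rw [log_div_log]
  have hν' : ∏ k, ((ν k : ℝ) + 1) ≤ s := by exact_mod_cast hν
  calc ∏ k, (2 * (ν k : ℝ) + 1) ≤ ∏ k, ((ν k : ℝ) + 1) ^ logb 2 3 :=
        Finset.prod_le_prod (fun _ _ => by positivity)
          (fun k _ => two_mul_natCast_add_one_le_rpow_logb (ν k))
    _ = (∏ k, ((ν k : ℝ) + 1)) ^ logb 2 3 :=
        finsetProd_rpow _ _ (fun k _ => by positivity) _
    _ ≤ (s : ℝ) ^ logb 2 3 :=
        rpow_le_rpow (by positivity) hν' (by linarith [four_div_three_le_logb_two_three])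

theorem hyperbolic_cross_legendre_weight_le
    (d s : ℕ) (hd : 1 ≤ d) (hs : 1 ≤ s) (ν : Fin d → ℕ)
    (hν : ∏ k, (ν k + 1) ≤ s) :
    (∏ k, (2 * (ν k : ℝ) + 1)) ≤ (s : ℝ) ^ (Real.log 3 / Real.log 2) :=
  hyperbolic_cross_legendre_weight_le_general d s ν hν
end

section
/- If 2 ≤ s ≤ 2^{d+1}, then sup over ν ∈ H_s of ∏_{k=1}^d (2ν_k+1) is at least s^{log 3/log 2}/3. -/
lemma prod_ite_lt {M : Type*} [CommMonoid M] (a b : M) (m n : ℕ) (hmn : m ≤ n) :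
    ∏ k : Fin n, (if (k : ℕ) < m then a else b) = a ^ m * b ^ (n - m) := by
  rw [Fin.prod_univ_eq_prod_range (fun i => if i < m then a else b) n,
    Finset.range_eq_Ico, ← Finset.prod_Ico_consecutive _ (Nat.zero_le m) hmn]
  rw [Finset.prod_congr rfl (fun x hx => if_pos (Finset.mem_Ico.mp hx).2),
    Finset.prod_congr rfl (fun x hx => if_neg (not_lt.mpr (Finset.mem_Ico.mp hx).1)),
    Finset.prod_const, Finset.prod_const, Nat.card_Ico, Nat.card_Ico, Nat.sub_zero]

theorem hyperbolic_cross_legendre_weight_lower_bound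
    (d s : ℕ) (hd : 1 ≤ d) (hs2 : 2 ≤ s) (hs : s ≤ 2 ^ (d + 1)) :
    ∃ ν : Fin d → ℕ, (∏ k, (ν k + 1) ≤ s) ∧
      (s : ℝ) ^ (Real.log 3 / Real.log 2) / 3 ≤ ∏ k, (2 * (ν k : ℝ) + 1) := by
  set m := Nat.log 2 (s - 1) with hm
  have hs1 : 1 ≤ s - 1 := by omega
  have h1 : 2 ^ m ≤ s - 1 := Nat.pow_log_le_self 2 (by omega)
  have h2 : s - 1 < 2 ^ (m + 1) := Nat.lt_pow_succ_log_self (by norm_num) _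
  have hsle : s ≤ 2 ^ (m + 1) := by omega
  have hmd : m ≤ d := by
    by_contra h
    have : 2 ^ (d + 1) ≤ 2 ^ m := Nat.pow_le_pow_right (by norm_num) (by omega)
    omega
  refine ⟨fun k => if (k : ℕ) < m then 1 else 0, ?_, ?_⟩
  · have : ∏ k : Fin d, ((if (k : ℕ) < m then 1 else 0) + 1)
        = ∏ k : Fin d, (if (k : ℕ) < m then 2 else 1) := by
      apply Finset.prod_congr rfl; intro k _; split <;> rfl
    rw [this, prod_ite_lt 2 1 m d hmd, one_pow, mul_one]
    omega
  · have hprod : ∏ k : Fin d, (2 * ((if (k : ℕ) < m then 1 else 0 : ℕ) : ℝ) + 1)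
        = (3 : ℝ) ^ m := by
      have : ∀ k : Fin d, (2 * ((if (k : ℕ) < m then 1 else 0 : ℕ) : ℝ) + 1)
          = (if (k : ℕ) < m then (3:ℝ) else 1) := by
        intro k; split <;> norm_num
      rw [Finset.prod_congr rfl (fun k _ => this k), prod_ite_lt 3 1 m d hmd,
        one_pow, mul_one]
    rw [hprod]
    have hL : (2 : ℝ) ^ (Real.log 3 / Real.log 2) = 3 := by
      rw [Real.rpow_def_of_pos (by norm_num), mul_comm,
        div_mul_cancel₀ _ (Real.log_ne_zero_of_pos_of_ne_one (by norm_num) (by norm_num)),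
        Real.exp_log (by norm_num)]
    have hkey : ((2 : ℝ) ^ (m + 1)) ^ (Real.log 3 / Real.log 2) = 3 ^ (m + 1) := by
      rw [← Real.rpow_natCast 2 (m + 1), ← Real.rpow_mul (by norm_num), mul_comm,
        Real.rpow_mul (by norm_num), hL, Real.rpow_natCast]
    have hLpos : 0 ≤ Real.log 3 / Real.log 2 :=
      div_nonneg (Real.log_nonneg (by norm_num)) (Real.log_nonneg (by norm_num))
    have : (s : ℝ) ^ (Real.log 3 / Real.log 2) ≤ 3 ^ (m + 1) := by
      rw [← hkey]
      apply Real.rpow_le_rpow (by positivity) _ hLpos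
      exact_mod_cast (by exact_mod_cast hsle : (s:ℝ) ≤ (2^(m+1) : ℕ))
    rw [div_le_iff₀ (by norm_num)]
    calc (s : ℝ) ^ (Real.log 3 / Real.log 2) ≤ 3 ^ (m + 1) := this
      _ = 3 ^ m * 3 := by ring
end

section
/- Let Λ ⊂ ℕ₀^d be a finite lower (downward closed) set with #Λ ≥ 2. Then 2·#Λ − 1 ≤ Σ_{ν∈Λ} 2^{‖ν‖₀} ≤ (#Λ)^{log 3/log 2}. -/
/-!
Lower bound: every term of `K_T(Λ)` is at least `2`, except the one for `ν = 0`, which is `1`.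

Upper bound, by induction on `d`: slicing `Λ` along the first coordinate gives lower sets
`Λ_0 ⊇ Λ_1 ⊇ ⋯` in dimension `d - 1`, and `K_T(Λ) = K_T(Λ_0) + 2 ∑_{j > 0} K_T(Λ_j)`. With
`p = log₂ 3`, so that `2 ^ p - 1 = 2`, the induction hypothesis reduces the claim to
`a ^ p + (2 ^ p - 1) ∑ b_j ^ p ≤ (a + ∑ b_j) ^ p` for `0 ≤ b_j ≤ a`. One summand at a time, this is
`(2b) ^ p - b ^ p ≤ (a + b) ^ p - a ^ p` for `b ≤ a`: the increments of the convex function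
`x ↦ x ^ p` increase.
-/

open Finset Real

theorem ConvexOn.sub_le_sub_of_le {𝕜 : Type*} [Field 𝕜] [LinearOrder 𝕜] [IsStrictOrderedRing 𝕜]
    {s : Set 𝕜} {f : 𝕜 → 𝕜} (hf : ConvexOn 𝕜 s f) {x y h : 𝕜} (hx : x ∈ s) (hy : y ∈ s)
    (hyh : y + h ∈ s) (hxy : x ≤ y) (hh : 0 ≤ h) :
    f (x + h) - f x ≤ f (y + h) - f y := by
  rcases hh.eq_or_lt with rfl | hh
  · simp
  have hxh : x + h ∈ s := hf.1.ordConnected.out hx hyh ⟨by linarith, by linarith⟩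
  have h₁ := hf.secant_mono hx hxh hyh (by linarith) (by linarith) (by linarith)
  have h₂ := hf.secant_mono hyh hx hy (by linarith) (by linarith) hxy
  rw [← neg_div_neg_eq, neg_sub, neg_sub] at h₂
  rw [← neg_div_neg_eq (f y - _), neg_sub, neg_sub, add_sub_cancel_left] at h₂
  rw [add_sub_cancel_left] at h₁
  exact (div_le_div_iff_of_pos_right hh).1 (h₁.trans h₂)

theorem rpow_add_two_rpow_sub_one_mul_rpow_le {p a b : ℝ} (hp : 1 ≤ p) (hb : 0 ≤ b) (hba : b ≤ a) :
    a ^ p + (2 ^ p - 1) * b ^ p ≤ (a + b) ^ p := by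
  have h := (convexOn_rpow hp).sub_le_sub_of_le (x := b) (y := a) (h := b) hb (hb.trans hba)
    (by simp only [Set.mem_Ici]; linarith) hba hb
  rw [← two_mul, mul_rpow zero_le_two hb] at h
  linarith

theorem rpow_add_two_rpow_sub_one_mul_sum_rpow_le {ι : Type*} (s : Finset ι) {p a : ℝ} {b : ι → ℝ}
    (hp : 1 ≤ p) (hb : ∀ i ∈ s, 0 ≤ b i) (hba : ∀ i ∈ s, b i ≤ a) :
    a ^ p + (2 ^ p - 1) * ∑ i ∈ s, b i ^ p ≤ (a + ∑ i ∈ s, b i) ^ p := by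
  classical
  induction s using Finset.induction_on with
  | empty => simp
  | insert i s hi ih =>
    simp only [mem_insert, forall_eq_or_imp] at hb hba
    have hsum : 0 ≤ ∑ j ∈ s, b j := sum_nonneg hb.2
    have := rpow_add_two_rpow_sub_one_mul_rpow_le (a := a + ∑ j ∈ s, b j) hp hb.1
      (by linarith [hba.1])
    rw [sum_insert hi, sum_insert hi, add_comm (b i), ← add_assoc]
    linarith [ih hb.2 hba.2]

/-- `K_T(Λ)`: `2 ^ ‖ν‖₀ = ‖T_ν‖²_∞` for the tensorized Chebyshev polynomial `T_ν`. -/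
def chebyshevWeight {ι : Type*} [Fintype ι] (Λ : Finset (ι → ℕ)) : ℕ :=
  ∑ ν ∈ Λ, 2 ^ (Finset.univ.filter (fun k => ν k ≠ 0)).card

theorem two_mul_card_le_chebyshevWeight_add_one {ι : Type*} [Fintype ι] (Λ : Finset (ι → ℕ)) :
    2 * #Λ ≤ chebyshevWeight Λ + 1 := by
  have hterm : ∀ ν ∈ Λ, 2 ≤ 2 ^ #{k | ν k ≠ 0} + if ν = 0 then 1 else 0 := by
    intro ν _
    split_ifs with h
    · simp [h]
    · obtain ⟨k, hk⟩ := Function.ne_iff.1 h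
      have : 1 ≤ #{k | ν k ≠ 0} := card_pos.2 ⟨k, by simpa using hk⟩
      have := Nat.pow_le_pow_right two_pos this
      omega
  have hzero : ∑ ν ∈ Λ, (if ν = 0 then 1 else 0) ≤ 1 := by
    rw [sum_ite_eq']; split_ifs <;> simp
  calc 2 * #Λ = ∑ ν ∈ Λ, 2 := by rw [sum_const, smul_eq_mul, mul_comm]
    _ ≤ ∑ ν ∈ Λ, (2 ^ #{k | ν k ≠ 0} + if ν = 0 then 1 else 0) := sum_le_sum hterm
    _ ≤ chebyshevWeight Λ + 1 := by rw [sum_add_distrib, chebyshevWeight]; omega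

section ConsPreimage

variable {n : ℕ}

noncomputable def consPreimage (Λ : Finset (Fin (n + 1) → ℕ)) (j : ℕ) : Finset (Fin n → ℕ) :=
  Λ.preimage (Fin.cons (α := fun _ => ℕ) j) (Fin.cons_right_injective (α := fun _ => ℕ) j).injOn

@[simp]
theorem mem_consPreimage {Λ : Finset (Fin (n + 1) → ℕ)} {j : ℕ} {μ : Fin n → ℕ} :
    μ ∈ consPreimage Λ j ↔ Fin.cons j μ ∈ Λ :=
  Finset.mem_preimage

theorem isLowerSet_consPreimage {Λ : Finset (Fin (n + 1) → ℕ)}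
    (hΛ : IsLowerSet (Λ : Set (Fin (n + 1) → ℕ))) (j : ℕ) :
    IsLowerSet (consPreimage Λ j : Set (Fin n → ℕ)) := fun _ _ hμ' hμ =>
  mem_consPreimage.2 <| hΛ (Fin.cons_le_cons.2 ⟨le_rfl, hμ'⟩) (mem_consPreimage.1 hμ)

theorem consPreimage_subset_consPreimage_zero {Λ : Finset (Fin (n + 1) → ℕ)}
    (hΛ : IsLowerSet (Λ : Set (Fin (n + 1) → ℕ))) (j : ℕ) :
    consPreimage Λ j ⊆ consPreimage Λ 0 := fun _ hμ =>
  mem_consPreimage.2 <| hΛ (Fin.cons_le_cons.2 ⟨Nat.zero_le j, le_rfl⟩) (mem_consPreimage.1 hμ)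

theorem sum_consPreimage {M : Type*} [AddCommMonoid M] (Λ : Finset (Fin (n + 1) → ℕ)) (j : ℕ)
    (g : (Fin (n + 1) → ℕ) → M) :
    ∑ μ ∈ consPreimage Λ j, g (Fin.cons j μ) = ∑ ν ∈ Λ with ν 0 = j, g ν := by
  have cons_tail {ν : Fin (n + 1) → ℕ} (hν : ν 0 = j) : Fin.cons j (Fin.tail ν) = ν := by
    rw [← hν, Fin.cons_self_tail]
  refine sum_nbij' (Fin.cons (α := fun _ => ℕ) j) Fin.tail ?_ ?_ ?_ ?_ ?_
  · simp
  · intro ν hν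
    rw [mem_filter] at hν
    simpa [cons_tail hν.2] using hν.1
  · simp
  · intro ν hν
    exact cons_tail (mem_filter.1 hν).2
  · simp

theorem sum_eq_sum_sum_consPreimage {M : Type*} [AddCommMonoid M] (Λ : Finset (Fin (n + 1) → ℕ))
    (J : Finset ℕ) (hJ : ∀ ν ∈ Λ, ν 0 ∈ J) (g : (Fin (n + 1) → ℕ) → M) :
    ∑ ν ∈ Λ, g ν = ∑ j ∈ J, ∑ μ ∈ consPreimage Λ j, g (Fin.cons j μ) := by
  simp_rw [sum_consPreimage]
  exact (sum_fiberwise_of_maps_to hJ g).symm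

theorem card_filter_cons_ne_zero (j : ℕ) (μ : Fin n → ℕ) :
    #{k | (Fin.cons j μ : Fin (n + 1) → ℕ) k ≠ 0} = #{k | μ k ≠ 0} + if j = 0 then 0 else 1 := by
  rw [card_filter, card_filter, Fin.sum_univ_succ]
  simp [add_comm]

theorem mem_insert_zero_erase_image_zero (Λ : Finset (Fin (n + 1) → ℕ)) {ν : Fin (n + 1) → ℕ}
    (hν : ν ∈ Λ) : ν 0 ∈ insert 0 ((Λ.image (· 0)).erase 0) :=
  insert_erase_subset 0 _ (mem_image_of_mem _ hν)

theorem card_eq_add_sum_card_consPreimage (Λ : Finset (Fin (n + 1) → ℕ)) :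
    #Λ = #(consPreimage Λ 0) + ∑ j ∈ (Λ.image (· 0)).erase 0, #(consPreimage Λ j) := by
  rw [card_eq_sum_ones,
    sum_eq_sum_sum_consPreimage Λ _ fun _ => mem_insert_zero_erase_image_zero Λ,
    sum_insert (notMem_erase 0 _)]
  simp only [← card_eq_sum_ones]

theorem chebyshevWeight_eq_add_two_mul_sum_consPreimage (Λ : Finset (Fin (n + 1) → ℕ)) :
    chebyshevWeight Λ = chebyshevWeight (consPreimage Λ 0) +
      2 * ∑ j ∈ (Λ.image (· 0)).erase 0, chebyshevWeight (consPreimage Λ j) := by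
  rw [chebyshevWeight,
    sum_eq_sum_sum_consPreimage Λ _ fun _ => mem_insert_zero_erase_image_zero Λ,
    sum_insert (notMem_erase 0 _), mul_sum]
  congr 1
  · simp [chebyshevWeight, card_filter_cons_ne_zero]
  · refine sum_congr rfl fun j hj => ?_
    rw [chebyshevWeight, mul_sum]
    refine sum_congr rfl fun μ _ => ?_
    rw [card_filter_cons_ne_zero, if_neg (ne_of_mem_erase hj), pow_succ, mul_comm]

end ConsPreimage

theorem chebyshevWeight_le_card_rpow_logb {d : ℕ} {Λ : Finset (Fin d → ℕ)}
    (hΛ : IsLowerSet (Λ : Set (Fin d → ℕ))) :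
    (chebyshevWeight Λ : ℝ) ≤ (#Λ : ℝ) ^ logb 2 3 := by
  have hp : 1 ≤ logb 2 3 := (le_logb_iff_rpow_le one_lt_two three_pos).2 (by norm_num)
  induction d with
  | zero =>
    have hK : chebyshevWeight Λ = #Λ := by simp [chebyshevWeight]
    have h1 : #Λ ≤ 1 := card_le_one_of_subsingleton Λ
    interval_cases #Λ <;> simp [hK, zero_rpow (zero_lt_one.trans_le hp).ne']
  | succ d ih =>
    have hsub (j : ℕ) : (#(consPreimage Λ j) : ℝ) ≤ #(consPreimage Λ 0) := by
      exact_mod_cast card_le_card (consPreimage_subset_consPreimage_zero hΛ j)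
    calc (chebyshevWeight Λ : ℝ)
        = chebyshevWeight (consPreimage Λ 0) +
            2 * ∑ j ∈ (Λ.image (· 0)).erase 0, (chebyshevWeight (consPreimage Λ j) : ℝ) := by
          rw [chebyshevWeight_eq_add_two_mul_sum_consPreimage]; push_cast; rfl
      _ ≤ #(consPreimage Λ 0) ^ logb 2 3 + (2 ^ logb 2 3 - 1) *
            ∑ j ∈ (Λ.image (· 0)).erase 0, (#(consPreimage Λ j) : ℝ) ^ logb 2 3 := by
          rw [rpow_logb two_pos (by norm_num) three_pos]
          gcongr with j
          · exact ih (isLowerSet_consPreimage hΛ 0)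
          · norm_num
          · exact ih (isLowerSet_consPreimage hΛ j)
      _ ≤ (#(consPreimage Λ 0) +
            ∑ j ∈ (Λ.image (· 0)).erase 0, (#(consPreimage Λ j) : ℝ)) ^ logb 2 3 :=
          rpow_add_two_rpow_sub_one_mul_sum_rpow_le _ hp (fun _ _ => Nat.cast_nonneg _)
            (fun j _ => hsub j)
      _ = (#Λ : ℝ) ^ logb 2 3 := by rw [card_eq_add_sum_card_consPreimage Λ]; push_cast; rfl

theorem KT_lower_set_bounds_general
    (d : ℕ) (Λ : Finset (Fin d → ℕ))
    (hlow : ∀ ν ∈ Λ, ∀ μ : Fin d → ℕ, (∀ k, μ k ≤ ν k) → μ ∈ Λ) :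
    2 * Λ.card - 1 ≤ ∑ ν ∈ Λ, 2 ^ (Finset.univ.filter (fun k => ν k ≠ 0)).card ∧
      ((∑ ν ∈ Λ, 2 ^ (Finset.univ.filter (fun k => ν k ≠ 0)).card : ℕ) : ℝ)
        ≤ (Λ.card : ℝ) ^ (Real.log 3 / Real.log 2) := by
  have hΛ : IsLowerSet (Λ : Set (Fin d → ℕ)) := fun ν μ hμν hν => hlow ν hν μ hμν
  refine ⟨?_, chebyshevWeight_le_card_rpow_logb hΛ⟩
  have := two_mul_card_le_chebyshevWeight_add_one Λ
  rw [chebyshevWeight] at this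
  omega

theorem KT_lower_set_bounds
    (d : ℕ) (Λ : Finset (Fin d → ℕ))
    (hlow : ∀ ν ∈ Λ, ∀ μ : Fin d → ℕ, (∀ k, μ k ≤ ν k) → μ ∈ Λ)
    (hcard : 2 ≤ Λ.card) :
    2 * Λ.card - 1 ≤ ∑ ν ∈ Λ, 2 ^ (Finset.univ.filter (fun k => ν k ≠ 0)).card ∧
      ((∑ ν ∈ Λ, 2 ^ (Finset.univ.filter (fun k => ν k ≠ 0)).card : ℕ) : ℝ)
        ≤ (Λ.card : ℝ) ^ (Real.log 3 / Real.log 2) :=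
  KT_lower_set_bounds_general d Λ hlow
end

section
/- Let K_L(s) = sup{Σ_{ν∈Λ} ∏_k (2ν_k+1) : Λ ⊂ H_s lower, #Λ = s}. Then for any d ≥ 1 and s ≥ 2, K_L(2s) ≥ 4·K_L(s). -/
/-- `K_L(s)`: the supremum of `∑_{ν ∈ Λ} ∏_k (2 ν_k + 1)` over lower sets
`Λ ⊆ H_s` of cardinality `s`. -/
noncomputable def KL (d s : ℕ) : ℕ :=
  sSup {t : ℕ | ∃ Λ : Finset (Fin d → ℕ),
    (∀ ν ∈ Λ, ∀ μ : Fin d → ℕ, (∀ k, μ k ≤ ν k) → μ ∈ Λ) ∧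
    (∀ ν ∈ Λ, ∏ k, (ν k + 1) ≤ s) ∧ Λ.card = s ∧
    t = ∑ ν ∈ Λ, ∏ k, (2 * ν k + 1)}

/-- Duplication: replace the `i0`-th coordinate `ν i0` by `2 * ν i0 + b`. -/
def KLdup {d : ℕ} (i0 : Fin d) (b : ℕ) (ν : Fin d → ℕ) : Fin d → ℕ :=
  fun k => if k = i0 then 2 * ν i0 + b else ν k

lemma KLdup_apply {d : ℕ} (i0 : Fin d) (b : ℕ) (ν : Fin d → ℕ) (k : Fin d) :
    KLdup i0 b ν k = if k = i0 then 2 * ν i0 + b else ν k := rfl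

lemma KLdup_injective {d : ℕ} (i0 : Fin d) (b : ℕ) :
    Function.Injective (KLdup i0 b) := by
  intro ν ν' h
  funext k
  by_cases hk : k = i0
  · subst hk
    have := congrFun h k
    simp [KLdup_apply] at this
    omega
  · have := congrFun h k
    simpa [KLdup_apply, hk] using this

/-- A spike at coordinate `i0`. -/
def KLspike {d : ℕ} (i0 : Fin d) (n : ℕ) : Fin d → ℕ :=
  fun k => if k = i0 then n else 0

/-- The doubling construction: duplicating every index of a lower set `Λ ⊆ H_s` of
cardinality `s` in the coordinate `i0` yields a lower set `⊆ H_{2s}` of cardinality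
`2s` whose weight sum is four times that of `Λ`. -/
lemma KL_double_witness {d s : ℕ} (i0 : Fin d) (Λ : Finset (Fin d → ℕ))
    (hlow : ∀ ν ∈ Λ, ∀ μ : Fin d → ℕ, (∀ k, μ k ≤ ν k) → μ ∈ Λ)
    (hH : ∀ ν ∈ Λ, ∏ k, (ν k + 1) ≤ s) (hcard : Λ.card = s) :
    ∃ Λ' : Finset (Fin d → ℕ),
      (∀ ν ∈ Λ', ∀ μ : Fin d → ℕ, (∀ k, μ k ≤ ν k) → μ ∈ Λ') ∧
      (∀ ν ∈ Λ', ∏ k, (ν k + 1) ≤ 2 * s) ∧ Λ'.card = 2 * s ∧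
      (∑ ν ∈ Λ', ∏ k, (2 * ν k + 1)) = 4 * ∑ ν ∈ Λ, ∏ k, (2 * ν k + 1) := by
  classical
  have prod_split : ∀ f : Fin d → ℕ,
      ∏ k, f k = f i0 * ∏ k ∈ Finset.univ.erase i0, f k := fun f =>
    (Finset.mul_prod_erase _ f (Finset.mem_univ i0)).symm
  have hdisj : Disjoint (Λ.image (KLdup i0 0)) (Λ.image (KLdup i0 1)) := by
    rw [Finset.disjoint_left]
    rintro a ha0 ha1
    obtain ⟨ν, _, rfl⟩ := Finset.mem_image.1 ha0
    obtain ⟨ν', _, h⟩ := Finset.mem_image.1 ha1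
    have := congrFun h i0
    simp [KLdup_apply] at this
    omega
  refine ⟨Λ.image (KLdup i0 0) ∪ Λ.image (KLdup i0 1), ?_, ?_, ?_, ?_⟩
  · -- lower
    rintro ν' hν' μ hμ
    have : ∃ b ≤ 1, ∃ ν ∈ Λ, KLdup i0 b ν = ν' := by
      rcases Finset.mem_union.1 hν' with h | h
      · obtain ⟨ν, hν, rfl⟩ := Finset.mem_image.1 h
        exact ⟨0, by omega, ν, hν, rfl⟩
      · obtain ⟨ν, hν, rfl⟩ := Finset.mem_image.1 h
        exact ⟨1, by omega, ν, hν, rfl⟩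
    obtain ⟨b, hb, ν, hν, rfl⟩ := this
    have hμ'mem : Function.update μ i0 (μ i0 / 2) ∈ Λ := by
      refine hlow ν hν _ (fun k => ?_)
      by_cases hk : k = i0
      · subst hk
        have h1 := hμ k
        rw [KLdup_apply] at h1
        simp at h1 ⊢
        omega
      · have h1 := hμ k
        rw [KLdup_apply] at h1
        simp [hk] at h1
        simpa [Function.update_of_ne hk] using h1
    have hμeq : μ = KLdup i0 (μ i0 % 2) (Function.update μ i0 (μ i0 / 2)) := by
      funext k
      rw [KLdup_apply]
      by_cases hk : k = i0
      · subst hk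
        simp
        omega
      · simp [hk, Function.update_of_ne hk]
    rcases Nat.mod_two_eq_zero_or_one (μ i0) with h2 | h2
    · rw [hμeq, h2]
      exact Finset.mem_union_left _ (Finset.mem_image_of_mem _ hμ'mem)
    · rw [hμeq, h2]
      exact Finset.mem_union_right _ (Finset.mem_image_of_mem _ hμ'mem)
  · -- in H_{2s}
    rintro ν' hν'
    have : ∃ b ≤ 1, ∃ ν ∈ Λ, KLdup i0 b ν = ν' := by
      rcases Finset.mem_union.1 hν' with h | h
      · obtain ⟨ν, hν, rfl⟩ := Finset.mem_image.1 h
        exact ⟨0, by omega, ν, hν, rfl⟩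
      · obtain ⟨ν, hν, rfl⟩ := Finset.mem_image.1 h
        exact ⟨1, by omega, ν, hν, rfl⟩
    obtain ⟨b, hb, ν, hν, rfl⟩ := this
    have herase : ∏ k ∈ Finset.univ.erase i0, (KLdup i0 b ν k + 1)
        = ∏ k ∈ Finset.univ.erase i0, (ν k + 1) :=
      Finset.prod_congr rfl (fun k hk => by
        rw [KLdup_apply]; simp [(Finset.mem_erase.1 hk).1])
    have hHν := hH ν hν
    rw [prod_split] at hHν ⊢
    rw [herase, KLdup_apply]
    simp only [if_pos rfl] at *
    calc (2 * ν i0 + b + 1) * ∏ k ∈ Finset.univ.erase i0, (ν k + 1)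
        ≤ (2 * (ν i0 + 1)) * ∏ k ∈ Finset.univ.erase i0, (ν k + 1) :=
          Nat.mul_le_mul_right _ (by omega)
      _ = 2 * ((ν i0 + 1) * ∏ k ∈ Finset.univ.erase i0, (ν k + 1)) := by ring
      _ ≤ 2 * s := Nat.mul_le_mul_left _ hHν
  · -- cardinality
    rw [Finset.card_union_of_disjoint hdisj,
      Finset.card_image_of_injective _ (KLdup_injective i0 0),
      Finset.card_image_of_injective _ (KLdup_injective i0 1), hcard]
    ring
  · -- sum
    rw [Finset.sum_union hdisj,
      Finset.sum_image (fun x _ y _ h => KLdup_injective i0 0 h),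
      Finset.sum_image (fun x _ y _ h => KLdup_injective i0 1 h),
      ← Finset.sum_add_distrib, Finset.mul_sum]
    refine Finset.sum_congr rfl (fun ν hν => ?_)
    have herase : ∀ b : ℕ, ∏ k ∈ Finset.univ.erase i0, (2 * KLdup i0 b ν k + 1)
        = ∏ k ∈ Finset.univ.erase i0, (2 * ν k + 1) := fun b =>
      Finset.prod_congr rfl (fun k hk => by
        rw [KLdup_apply]; simp [(Finset.mem_erase.1 hk).1])
    rw [prod_split (fun k => 2 * KLdup i0 0 ν k + 1),
      prod_split (fun k => 2 * KLdup i0 1 ν k + 1),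
      prod_split (fun k => 2 * ν k + 1),
      herase 0, herase 1, KLdup_apply, KLdup_apply]
    simp only [eq_self_iff_true, if_true]
    ring

theorem KL_doubling (d s : ℕ) (hd : 1 ≤ d) (hs : 2 ≤ s) :
    4 * KL d s ≤ KL d (2 * s) := by
  classical
  have hd' : 0 < d := hd
  have i0 : Fin d := ⟨0, hd'⟩
  have prod_split : ∀ f : Fin d → ℕ,
      ∏ k, f k = f i0 * ∏ k ∈ Finset.univ.erase i0, f k := fun f =>
    (Finset.mul_prod_erase _ f (Finset.mem_univ i0)).symm
  -- boundedness of the defining sets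
  have bdd : ∀ m : ℕ, BddAbove {t : ℕ | ∃ Λ : Finset (Fin d → ℕ),
      (∀ ν ∈ Λ, ∀ μ : Fin d → ℕ, (∀ k, μ k ≤ ν k) → μ ∈ Λ) ∧
      (∀ ν ∈ Λ, ∏ k, (ν k + 1) ≤ m) ∧ Λ.card = m ∧
      t = ∑ ν ∈ Λ, ∏ k, (2 * ν k + 1)} := by
    intro m
    refine ⟨m * (2 ^ d * m), ?_⟩
    rintro t ⟨Λ, hlow, hH, hcard, rfl⟩
    calc ∑ ν ∈ Λ, ∏ k, (2 * ν k + 1)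
        ≤ ∑ _ν ∈ Λ, 2 ^ d * m := Finset.sum_le_sum (fun ν hν => by
          calc ∏ k, (2 * ν k + 1) ≤ ∏ k : Fin d, 2 * (ν k + 1) :=
              Finset.prod_le_prod (fun _ _ => Nat.zero_le _) (fun k _ => by omega)
            _ = 2 ^ d * ∏ k, (ν k + 1) := by
              rw [Finset.prod_mul_distrib, Finset.prod_const, Finset.card_univ,
                Fintype.card_fin]
            _ ≤ 2 ^ d * m := Nat.mul_le_mul_left _ (hH ν hν))
      _ = m * (2 ^ d * m) := by rw [Finset.sum_const, hcard, smul_eq_mul]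
  -- nonemptiness for s
  have hne : ({t : ℕ | ∃ Λ : Finset (Fin d → ℕ),
      (∀ ν ∈ Λ, ∀ μ : Fin d → ℕ, (∀ k, μ k ≤ ν k) → μ ∈ Λ) ∧
      (∀ ν ∈ Λ, ∏ k, (ν k + 1) ≤ s) ∧ Λ.card = s ∧
      t = ∑ ν ∈ Λ, ∏ k, (2 * ν k + 1)} : Set ℕ).Nonempty := by
    have hginj : Function.Injective (KLspike i0) := by
      intro a b h
      simpa [KLspike] using congrFun h i0
    refine ⟨∑ ν ∈ (Finset.range s).image (KLspike i0), ∏ k, (2 * ν k + 1),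
      (Finset.range s).image (KLspike i0), ?_, ?_, ?_, rfl⟩
    · rintro ν hν μ hμ
      obtain ⟨n, hn, rfl⟩ := Finset.mem_image.1 hν
      rw [Finset.mem_range] at hn
      have hμeq : μ = KLspike i0 (μ i0) := by
        funext k
        by_cases hk : k = i0
        · simp [KLspike, hk]
        · have := hμ k
          simp [KLspike, hk] at this ⊢
          omega
      rw [hμeq]
      refine Finset.mem_image.2 ⟨μ i0, Finset.mem_range.2 ?_, rfl⟩
      have := hμ i0
      simp [KLspike] at this
      omega
    · rintro ν hν
      obtain ⟨n, hn, rfl⟩ := Finset.mem_image.1 hν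
      rw [Finset.mem_range] at hn
      rw [prod_split]
      have h1 : ∏ k ∈ Finset.univ.erase i0, (KLspike i0 n k + 1) = 1 :=
        Finset.prod_eq_one (fun k hk => by
          simp [KLspike, (Finset.mem_erase.1 hk).1])
      rw [h1]
      simp [KLspike]
      omega
    · rw [Finset.card_image_of_injective _ hginj, Finset.card_range]
  -- take a witness for KL d s
  have hmem : ∃ Λ : Finset (Fin d → ℕ),
      (∀ ν ∈ Λ, ∀ μ : Fin d → ℕ, (∀ k, μ k ≤ ν k) → μ ∈ Λ) ∧
      (∀ ν ∈ Λ, ∏ k, (ν k + 1) ≤ s) ∧ Λ.card = s ∧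
      KL d s = ∑ ν ∈ Λ, ∏ k, (2 * ν k + 1) := Nat.sSup_mem hne (bdd s)
  obtain ⟨Λ, hlow, hH, hcard, hsum⟩ := hmem
  obtain ⟨Λ', hlow', hH', hcard', hsum'⟩ := KL_double_witness i0 Λ hlow hH hcard
  have key : (4 * KL d s) ∈ {t : ℕ | ∃ Λ : Finset (Fin d → ℕ),
      (∀ ν ∈ Λ, ∀ μ : Fin d → ℕ, (∀ k, μ k ≤ ν k) → μ ∈ Λ) ∧
      (∀ ν ∈ Λ, ∏ k, (ν k + 1) ≤ 2 * s) ∧ Λ.card = 2 * s ∧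
      t = ∑ ν ∈ Λ, ∏ k, (2 * ν k + 1)} :=
    ⟨Λ', hlow', hH', hcard', by rw [hsum', hsum]⟩
  exact le_csSup (bdd (2 * s)) key
end

section
/- Let K_T(s) = sup{Σ_{ν∈Λ} 2^{‖ν‖₀} : Λ ⊂ H_s lower, #Λ = s}. Then for any d ≥ 1 and s ≥ 2, K_T(2s) ≥ 2·K_T(s). -/
/-- `K_T(s)`: the supremum of `∑_{ν ∈ Λ} 2 ^ ‖ν‖₀` over lower sets
`Λ ⊆ H_s` of cardinality `s`. -/
noncomputable def KT (d s : ℕ) : ℕ :=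
  sSup {t : ℕ | ∃ Λ : Finset (Fin d → ℕ),
    (∀ ν ∈ Λ, ∀ μ : Fin d → ℕ, (∀ k, μ k ≤ ν k) → μ ∈ Λ) ∧
    (∀ ν ∈ Λ, ∏ k, (ν k + 1) ≤ s) ∧ Λ.card = s ∧
    t = ∑ ν ∈ Λ, 2 ^ (Finset.univ.filter (fun k => ν k ≠ 0)).card}

open Finset in
theorem KT_doubling (d s : ℕ) (hd : 1 ≤ d) (hs : 2 ≤ s) :
    2 * KT d s ≤ KT d (2 * s) := by
  classical
  have key : ∀ m : ℕ, BddAbove {t : ℕ | ∃ Λ : Finset (Fin d → ℕ),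
      (∀ ν ∈ Λ, ∀ μ : Fin d → ℕ, (∀ k, μ k ≤ ν k) → μ ∈ Λ) ∧
      (∀ ν ∈ Λ, ∏ k, (ν k + 1) ≤ m) ∧ Λ.card = m ∧
      t = ∑ ν ∈ Λ, 2 ^ (Finset.univ.filter (fun k => ν k ≠ 0)).card} := by
    intro m
    refine ⟨m * 2 ^ d, ?_⟩
    rintro t ⟨Λ, -, -, hcard, rfl⟩
    calc ∑ ν ∈ Λ, 2 ^ (Finset.univ.filter (fun k => ν k ≠ 0)).card
        ≤ ∑ _ν ∈ Λ, 2 ^ d := by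
          refine Finset.sum_le_sum fun ν _ => Nat.pow_le_pow_right (by norm_num) ?_
          exact (Finset.card_filter_le _ _).trans (by simp)
      _ = m * 2 ^ d := by rw [Finset.sum_const, hcard, smul_eq_mul]
  unfold KT
  rcases Set.eq_empty_or_nonempty {t : ℕ | ∃ Λ : Finset (Fin d → ℕ),
      (∀ ν ∈ Λ, ∀ μ : Fin d → ℕ, (∀ k, μ k ≤ ν k) → μ ∈ Λ) ∧
      (∀ ν ∈ Λ, ∏ k, (ν k + 1) ≤ s) ∧ Λ.card = s ∧
      t = ∑ ν ∈ Λ, 2 ^ (Finset.univ.filter (fun k => ν k ≠ 0)).card} with hS | hS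
  · rw [hS, csSup_empty]
    simp
  · have hmem := Nat.sSup_mem hS (key s)
    obtain ⟨Λ, hlow, hH, hcard, hsum⟩ := hmem
    rw [hsum]
    clear hsum
    -- doubling construction
    set i0 : Fin d := ⟨0, hd⟩ with hi0
    set u : ℕ → (Fin d → ℕ) → (Fin d → ℕ) :=
      fun b ν => Function.update ν i0 (2 * ν i0 + b) with hu
    have hu_at : ∀ b ν, u b ν i0 = 2 * ν i0 + b := by
      intro b ν; simp [hu]
    have hu_ne : ∀ b ν (k : Fin d), k ≠ i0 → u b ν k = ν k := by
      intro b ν k hk; simp [hu, Function.update_of_ne hk]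
    have inj : ∀ b, Function.Injective (u b) := by
      intro b ν μ h
      funext k
      by_cases hk : k = i0
      · subst hk
        have h1 := congrFun h i0
        rw [hu_at, hu_at] at h1
        omega
      · have h1 := congrFun h k
        rwa [hu_ne b ν k hk, hu_ne b μ k hk] at h1
    set Λ' : Finset (Fin d → ℕ) := Λ.image (u 0) ∪ Λ.image (u 1) with hΛ'
    have hmem' : ∀ μ ∈ Λ', ∃ b ≤ 1, ∃ ν ∈ Λ, μ = u b ν := by
      intro μ hμ
      rcases Finset.mem_union.mp hμ with h | h
      · obtain ⟨ν, hν, rfl⟩ := Finset.mem_image.mp h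
        exact ⟨0, by norm_num, ν, hν, rfl⟩
      · obtain ⟨ν, hν, rfl⟩ := Finset.mem_image.mp h
        exact ⟨1, le_refl 1, ν, hν, rfl⟩
    have hdisj : Disjoint (Λ.image (u 0)) (Λ.image (u 1)) := by
      rw [Finset.disjoint_left]
      rintro μ h0 h1
      obtain ⟨ν, _, rfl⟩ := Finset.mem_image.mp h0
      obtain ⟨ν', _, heq⟩ := Finset.mem_image.mp h1
      have := congrFun heq i0
      rw [hu_at, hu_at] at this
      omega
    -- cardinality
    have hcard' : Λ'.card = 2 * s := by
      rw [hΛ', Finset.card_union_of_disjoint hdisj,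
        Finset.card_image_of_injective _ (inj 0),
        Finset.card_image_of_injective _ (inj 1), hcard]
      ring
    -- lower set
    have hlow' : ∀ ν ∈ Λ', ∀ μ : Fin d → ℕ, (∀ k, μ k ≤ ν k) → μ ∈ Λ' := by
      intro μ hμ μ' hle
      obtain ⟨b, hb, ν, hν, rfl⟩ := hmem' μ hμ
      set ν' : Fin d → ℕ := Function.update μ' i0 (μ' i0 / 2) with hν'def
      have hν'mem : ν' ∈ Λ := by
        refine hlow ν hν ν' fun k => ?_
        by_cases hk : k = i0
        · subst hk
          have h1 : μ' i0 ≤ 2 * ν i0 + b := by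
            have := hle i0; rwa [hu_at] at this
          simp only [hν'def, Function.update_self]
          omega
        · rw [hν'def, Function.update_of_ne hk]
          have := hle k; rwa [hu_ne b ν k hk] at this
      have hrepr : μ' = u (μ' i0 % 2) ν' := by
        funext k
        by_cases hk : k = i0
        · subst hk
          rw [hu_at]
          simp only [hν'def, Function.update_self]
          omega
        · rw [hu_ne _ _ _ hk, hν'def, Function.update_of_ne hk]
      rw [hΛ', Finset.mem_union]
      rcases Nat.mod_two_eq_zero_or_one (μ' i0) with h2 | h2
      · left; rw [hrepr, h2]; exact Finset.mem_image_of_mem _ hν'mem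
      · right; rw [hrepr, h2]; exact Finset.mem_image_of_mem _ hν'mem
    -- hyperbolic cross
    have hH' : ∀ ν ∈ Λ', ∏ k, (ν k + 1) ≤ 2 * s := by
      intro μ hμ
      obtain ⟨b, hb, ν, hν, rfl⟩ := hmem' μ hμ
      have e1 : ∏ k, (u b ν k + 1)
          = (u b ν i0 + 1) * ∏ k ∈ Finset.univ.erase i0, (u b ν k + 1) :=
        (Finset.mul_prod_erase Finset.univ _ (Finset.mem_univ i0)).symm
      have e2 : ∏ k ∈ Finset.univ.erase i0, (u b ν k + 1)
          = ∏ k ∈ Finset.univ.erase i0, (ν k + 1) := by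
        refine Finset.prod_congr rfl fun k hk => ?_
        rw [hu_ne b ν k (Finset.mem_erase.mp hk).1]
      have e3 : ∏ k, (ν k + 1)
          = (ν i0 + 1) * ∏ k ∈ Finset.univ.erase i0, (ν k + 1) :=
        (Finset.mul_prod_erase Finset.univ _ (Finset.mem_univ i0)).symm
      have hb1 : u b ν i0 + 1 ≤ 2 * (ν i0 + 1) := by rw [hu_at]; omega
      calc ∏ k, (u b ν k + 1)
          = (u b ν i0 + 1) * ∏ k ∈ Finset.univ.erase i0, (ν k + 1) := by
            rw [e1, e2]
        _ ≤ (2 * (ν i0 + 1)) * ∏ k ∈ Finset.univ.erase i0, (ν k + 1) :=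
            Nat.mul_le_mul_right _ hb1
        _ = 2 * ∏ k, (ν k + 1) := by rw [e3]; ring
        _ ≤ 2 * s := Nat.mul_le_mul_left _ (hH ν hν)
    -- weight comparison
    have wmono : ∀ b (ν : Fin d → ℕ),
        2 ^ (Finset.univ.filter (fun k => ν k ≠ 0)).card
        ≤ 2 ^ (Finset.univ.filter (fun k => u b ν k ≠ 0)).card := by
      intro b ν
      refine Nat.pow_le_pow_right (by norm_num) (Finset.card_le_card ?_)
      intro k hk
      rw [Finset.mem_filter] at hk ⊢
      refine ⟨Finset.mem_univ k, ?_⟩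
      by_cases hki : k = i0
      · subst hki; rw [hu_at]; omega
      · rw [hu_ne b ν k hki]; exact hk.2
    have hsum' : 2 * ∑ ν ∈ Λ, 2 ^ (Finset.univ.filter (fun k => ν k ≠ 0)).card
        ≤ ∑ ν ∈ Λ', 2 ^ (Finset.univ.filter (fun k => ν k ≠ 0)).card := by
      rw [hΛ', Finset.sum_union hdisj,
        Finset.sum_image (fun a _ b _ h => inj 0 h),
        Finset.sum_image (fun a _ b _ h => inj 1 h), two_mul]
      exact Nat.add_le_add (Finset.sum_le_sum fun ν _ => wmono 0 ν)
        (Finset.sum_le_sum fun ν _ => wmono 1 ν)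
    refine hsum'.trans (le_csSup (key (2 * s)) ?_)
    exact ⟨Λ', hlow', hH', hcard', rfl⟩
end

section
/- For s ≥ 2, the Chebyshev quantity satisfies K_T(s) ≥ (3/2)·max_{ν ∈ H_s} 2^{‖ν‖₀}, where K_T(s) is the supremum of Σ_{ν∈Λ} 2^{‖ν‖₀} over lower sets Λ ⊂ H_s of cardinality s. -/
lemma sum_range_weight (n : ℕ) :
    ∑ j ∈ Finset.range (n+1), (if j ≠ 0 then 2 else 1) = 2 * n + 1 := by
  induction n with
  | zero => simp
  | succ n ih => rw [Finset.sum_range_succ, ih]; simp; omega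

theorem KT_ge_max_weight (d s : ℕ) (hd : 1 ≤ d) (hs : 2 ≤ s)
    (ν : Fin d → ℕ) (hν : ∏ k, (ν k + 1) ≤ s) :
    (3 / 2 : ℝ) * (2 : ℝ) ^ (Finset.univ.filter (fun k => ν k ≠ 0)).card
      ≤ (KT d s : ℝ) := by
  classical
  set m := (Finset.univ.filter (fun k => ν k ≠ 0)).card with hm
  set i0 : Fin d := ⟨0, hd⟩ with hi0
  set P := ∏ k, (ν k + 1) with hP
  set t := s - P + ν i0 + 1 with ht
  set e : ℕ → (Fin d → ℕ) := fun j k => if k = i0 then j else 0 with he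
  have hei : Function.Injective e := by
    intro a b hab
    have := congrFun hab i0
    simpa [he] using this
  set R : Finset (Fin d → ℕ) := Fintype.piFinset (fun k => Finset.range (ν k + 1)) with hR
  set C : Finset (Fin d → ℕ) := (Finset.range t).image e with hC
  set Λ : Finset (Fin d → ℕ) := R ∪ C with hΛ
  have hν0P : ν i0 + 1 ≤ P :=
    Finset.single_le_prod' (fun i _ => Nat.le_add_left 1 (ν i)) (Finset.mem_univ i0)
  have hPs : P ≤ s := hν
  have htle : t ≤ s := by omega
  have hνt : ν i0 + 1 ≤ t := by omega
  -- lower set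
  have hlow : ∀ μ ∈ Λ, ∀ μ' : Fin d → ℕ, (∀ k, μ' k ≤ μ k) → μ' ∈ Λ := by
    intro μ hμ μ' hle
    rcases Finset.mem_union.1 hμ with h | h
    · refine Finset.mem_union_left _ ?_
      simp only [hR, Fintype.mem_piFinset, Finset.mem_range] at h ⊢
      intro k
      exact lt_of_le_of_lt (hle k) (h k)
    · refine Finset.mem_union_right _ ?_
      simp only [hC, Finset.mem_image, Finset.mem_range] at h ⊢
      obtain ⟨j, hj, rfl⟩ := h
      refine ⟨μ' i0, ?_, ?_⟩
      · have := hle i0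
        simp only [he, if_pos rfl] at this
        omega
      · funext k
        by_cases hk : k = i0
        · simp [he, hk]
        · have := hle k
          simp only [he, if_neg hk] at this ⊢
          omega
  -- contained in H_s
  have hHs : ∀ μ ∈ Λ, ∏ k, (μ k + 1) ≤ s := by
    intro μ hμ
    rcases Finset.mem_union.1 hμ with h | h
    · simp only [hR, Fintype.mem_piFinset, Finset.mem_range] at h
      calc ∏ k, (μ k + 1) ≤ ∏ k, (ν k + 1) :=
            Finset.prod_le_prod' fun k _ => by have := h k; omega
        _ ≤ s := hν
    · obtain ⟨j, hj, rfl⟩ := Finset.mem_image.1 h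
      have hje : ∏ k, (e j k + 1) = j + 1 := by
        rw [Finset.prod_eq_single_of_mem i0 (Finset.mem_univ i0)
          (fun b _ hb => by simp [he, hb])]
        simp [he]
      rw [hje]
      have := Finset.mem_range.1 hj
      omega
  -- cardinalities
  have hRcard : R.card = P := by
    simp [hR, Fintype.card_piFinset, hP]
  have hCcard : C.card = t := by
    rw [hC, Finset.card_image_of_injective _ hei, Finset.card_range]
  have hRCeq : R ∩ C = (Finset.range (ν i0 + 1)).image e := by
    ext μ
    simp only [Finset.mem_inter, hR, hC, Fintype.mem_piFinset, Finset.mem_image,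
      Finset.mem_range]
    constructor
    · rintro ⟨h1, j, hj, rfl⟩
      refine ⟨j, ?_, rfl⟩
      have := h1 i0
      simp only [he, if_pos rfl] at this
      omega
    · rintro ⟨j, hj, rfl⟩
      refine ⟨fun k => ?_, j, by omega, rfl⟩
      by_cases hk : k = i0 <;> simp [he, hk] <;> omega
  have hRC : (R ∩ C).card = ν i0 + 1 := by
    rw [hRCeq, Finset.card_image_of_injective _ hei, Finset.card_range]
  have hΛcard : Λ.card = s := by
    have key : Λ.card + (R ∩ C).card = R.card + C.card := by
      rw [hΛ]; exact Finset.card_union_add_card_inter R C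
    rw [hRcard, hCcard, hRC] at key
    omega
  -- weight as a product
  have hw : ∀ μ : Fin d → ℕ,
      2 ^ (Finset.univ.filter (fun k => μ k ≠ 0)).card
        = ∏ k, (if μ k ≠ 0 then 2 else 1) := by
    intro μ
    rw [Finset.prod_ite, Finset.prod_const, Finset.prod_const, one_pow, mul_one]
  -- sum over the block R
  have hsumR : ∑ μ ∈ R, 2 ^ (Finset.univ.filter (fun k => μ k ≠ 0)).card
      = ∏ k, (2 * ν k + 1) := by
    rw [Finset.sum_congr rfl (fun μ _ => hw μ)]
    rw [hR, ← Finset.prod_univ_sum (fun k => Finset.range (ν k + 1))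
      (fun k j => if j ≠ 0 then 2 else 1)]
    exact Finset.prod_congr rfl fun k _ => sum_range_weight (ν k)
  have h3 : 3 ^ m ≤ ∏ k, (2 * ν k + 1) := by
    calc 3 ^ m = ∏ k ∈ Finset.univ.filter (fun k => ν k ≠ 0), 3 := by
          rw [Finset.prod_const, hm]
      _ ≤ ∏ k ∈ Finset.univ.filter (fun k => ν k ≠ 0), (2 * ν k + 1) :=
          Finset.prod_le_prod' fun k hk => by
            have h1 := (Finset.mem_filter.1 hk).2
            clear hsumR; omega
      _ = ∏ k, (2 * ν k + 1) :=
          Finset.prod_filter_of_ne fun k _ h => by clear hsumR; omega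
  -- membership and boundedness
  have hmem : (∑ μ ∈ Λ, 2 ^ (Finset.univ.filter (fun k => μ k ≠ 0)).card) ∈
      {t : ℕ | ∃ Λ : Finset (Fin d → ℕ),
        (∀ ν ∈ Λ, ∀ μ : Fin d → ℕ, (∀ k, μ k ≤ ν k) → μ ∈ Λ) ∧
        (∀ ν ∈ Λ, ∏ k, (ν k + 1) ≤ s) ∧ Λ.card = s ∧
        t = ∑ ν ∈ Λ, 2 ^ (Finset.univ.filter (fun k => ν k ≠ 0)).card} :=
    ⟨Λ, hlow, hHs, hΛcard, rfl⟩
  have hbdd : BddAbove {t : ℕ | ∃ Λ : Finset (Fin d → ℕ),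
        (∀ ν ∈ Λ, ∀ μ : Fin d → ℕ, (∀ k, μ k ≤ ν k) → μ ∈ Λ) ∧
        (∀ ν ∈ Λ, ∏ k, (ν k + 1) ≤ s) ∧ Λ.card = s ∧
        t = ∑ ν ∈ Λ, 2 ^ (Finset.univ.filter (fun k => ν k ≠ 0)).card} := by
    refine ⟨s * 2 ^ d, fun x hx => ?_⟩
    obtain ⟨Λ', h1, h2, h3, rfl⟩ := hx
    calc ∑ μ ∈ Λ', 2 ^ (Finset.univ.filter (fun k => μ k ≠ 0)).card
        ≤ ∑ _μ ∈ Λ', 2 ^ d := Finset.sum_le_sum fun μ _ =>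
          Nat.pow_le_pow_right (by norm_num)
            (le_trans (Finset.card_filter_le _ _) (by simp))
      _ = Λ'.card * 2 ^ d := by rw [Finset.sum_const, smul_eq_mul]
      _ = s * 2 ^ d := by rw [h3]
  have hKT : (∑ μ ∈ Λ, 2 ^ (Finset.univ.filter (fun k => μ k ≠ 0)).card) ≤ KT d s :=
    le_csSup hbdd hmem
  rcases Nat.eq_zero_or_pos m with hm0 | hm1
  · -- m = 0 : all ν k = 0
    have hν0 : ∀ k, ν k = 0 := by
      intro k
      by_contra hk
      have hkm : k ∈ Finset.univ.filter (fun k => ν k ≠ 0) :=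
        Finset.mem_filter.2 ⟨Finset.mem_univ _, hk⟩
      have := Finset.card_pos.2 ⟨k, hkm⟩
      clear hsumR hKT; omega
    have hP1 : P = 1 := by
      rw [hP]; exact Finset.prod_eq_one fun k _ => by simp [hν0 k]
    have h0mem : (fun _ => 0 : Fin d → ℕ) ∈ Λ := by
      refine Finset.mem_union_left _ ?_
      simp [hR, Fintype.mem_piFinset]
    have h1mem : e 1 ∈ Λ := by
      refine Finset.mem_union_right _ ?_
      simp only [hC, Finset.mem_image, Finset.mem_range]
      refine ⟨1, by clear hsumR hKT; omega, rfl⟩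
    have hne : (fun _ => 0 : Fin d → ℕ) ≠ e 1 := by
      intro h
      have := congrFun h i0
      simp [he] at this
    have hsub : ({(fun _ => 0 : Fin d → ℕ), e 1} : Finset (Fin d → ℕ)) ⊆ Λ := by
      intro x hx
      rcases Finset.mem_insert.1 hx with rfl | hx
      · exact h0mem
      · rw [Finset.mem_singleton.1 hx]; exact h1mem
    have hpairsum : ∑ μ ∈ ({(fun _ => 0 : Fin d → ℕ), e 1} : Finset (Fin d → ℕ)),
        2 ^ (Finset.univ.filter (fun k => μ k ≠ 0)).card = 3 := by
      rw [Finset.sum_pair hne]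
      have hzero : (Finset.univ.filter (fun k => (fun _ => 0 : Fin d → ℕ) k ≠ 0)).card = 0 := by
        simp
      have hone : (Finset.univ.filter (fun k => e 1 k ≠ 0)).card = 1 := by
        have : (Finset.univ.filter (fun k => e 1 k ≠ 0)) = {i0} := by
          ext k
          by_cases hk : k = i0 <;> simp [he, hk]
        rw [this, Finset.card_singleton]
      rw [hzero, hone]; norm_num
    have h3le : 3 ≤ ∑ μ ∈ Λ, 2 ^ (Finset.univ.filter (fun k => μ k ≠ 0)).card := by
      rw [← hpairsum]
      exact Finset.sum_le_sum_of_subset hsub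
    have h3KT : 3 ≤ KT d s := le_trans h3le hKT
    have : (3 : ℝ) ≤ (KT d s : ℝ) := by exact_mod_cast h3KT
    rw [hm0]
    norm_num
    linarith
  · -- m ≥ 1
    have hsub : R ⊆ Λ := Finset.subset_union_left
    have h3KT : 3 ^ m ≤ KT d s := by
      refine le_trans ?_ hKT
      rw [← hsumR] at h3
      exact le_trans h3 (Finset.sum_le_sum_of_subset hsub)
    have hcast : ((3 : ℝ)) ^ m ≤ (KT d s : ℝ) := by exact_mod_cast h3KT
    have key : (3 / 2 : ℝ) * 2 ^ m ≤ 3 ^ m := by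
      have h1 : (3 / 2 : ℝ) ≤ (3 / 2) ^ m := le_self_pow₀ (by norm_num) (Nat.pos_iff_ne_zero.1 hm1)
      have h2 : (3 / 2 : ℝ) ^ m * 2 ^ m = 3 ^ m := by
        rw [← mul_pow]; norm_num
      nlinarith [pow_pos (show (0:ℝ) < 2 by norm_num) m]
    linarith
end

section
/- For s ≥ 2, the Legendre quantity satisfies K_L(s) ≥ (4/3)·max_{ν ∈ H_s} ∏_k(2ν_k+1), where K_L(s) is the supremum of Σ_{ν∈Λ} ∏_k(2ν_k+1) over lower sets Λ ⊂ H_s of cardinality s. -/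
open Finset

/-!
For `ν ∈ H_s` the box `R_ν = Iic ν` is a lower subset of `H_s` of weight
`∏_k (ν_k + 1)² ≥ (4/3) ∏_k (2ν_k + 1)` (as soon as `ν ≠ 0`), and growing it one minimal element
at a time gives a lower set of cardinality `s` inside `H_s`, so `K_L(s)` is at least that weight.
For `ν = 0` every weight is at least `1`, so `K_L(s) ≥ s ≥ 2`.
-/

/-- Adding a minimal element of `H \ Λ` to `Λ` keeps it a lower set. -/
theorem exists_isLowerSet_card_eq_of_subset {α : Type*} [PartialOrder α] {Λ H : Finset α}
    (hΛ : IsLowerSet (Λ : Set α)) (hH : IsLowerSet (H : Set α)) (hΛH : Λ ⊆ H) {n : ℕ}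
    (hΛn : #Λ ≤ n) (hnH : n ≤ #H) :
    ∃ Λ', Λ ⊆ Λ' ∧ Λ' ⊆ H ∧ IsLowerSet (Λ' : Set α) ∧ #Λ' = n := by
  classical
  induction n, hΛn using Nat.le_induction with
  | base => exact ⟨Λ, subset_rfl, hΛH, hΛ, rfl⟩
  | succ n _ ih =>
    obtain ⟨Λ', hΛΛ', hΛ'H, hΛ', rfl⟩ := ih (by omega)
    have hne : (H \ Λ').Nonempty := sdiff_nonempty.2 fun hHΛ' => by
      have := card_le_card hHΛ'
      omega
    obtain ⟨m, hm⟩ := exists_minimal hne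
    have hmH := (mem_sdiff.1 hm.1).1
    have hmΛ' := (mem_sdiff.1 hm.1).2
    refine ⟨insert m Λ', hΛΛ'.trans (subset_insert _ _), insert_subset hmH hΛ'H, ?_,
      card_insert_of_notMem hmΛ'⟩
    intro a b hba ha
    simp only [coe_insert, Set.mem_insert_iff, mem_coe] at ha ⊢
    rcases ha with rfl | ha
    · by_cases hb : b ∈ Λ'
      · exact .inr hb
      · exact .inl (hm.eq_of_le (mem_sdiff.2 ⟨hH hba hmH, hb⟩) hba)
    · exact .inr (hΛ' hba ha)

theorem sum_Iic_two_mul_add_one (n : ℕ) : ∑ j ∈ Iic n, (2 * j + 1) = (n + 1) ^ 2 := by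
  rw [← Nat.range_succ_eq_Iic]
  induction n with
  | zero => simp
  | succ n ih => rw [sum_range_succ, ih]; ring

theorem sum_Iic_prod_two_mul_add_one {ι : Type*} [Fintype ι] [DecidableEq ι] (ν : ι → ℕ) :
    ∑ μ ∈ Iic ν, ∏ k, (2 * μ k + 1) = ∏ k, (ν k + 1) ^ 2 := by
  rw [← Fintype.prod_congr _ _ fun k => sum_Iic_two_mul_add_one (ν k), prod_univ_sum]
  rfl

/-- The factor `4/3` comes from `3 (t + 1)² - 4 (2t + 1) = (3t + 1)(t - 1) ≥ 0` for `t ≥ 1`. -/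
theorem four_mul_prod_le_three_mul_prod_sq {ι : Type*} [Fintype ι] {ν : ι → ℕ} (hν : ν ≠ 0) :
    4 * ∏ k, (2 * ν k + 1) ≤ 3 * ∏ k, (ν k + 1) ^ 2 := by
  classical
  obtain ⟨i, hi⟩ := Function.ne_iff.1 hν
  have hi' : 1 ≤ ν i := Nat.one_le_iff_ne_zero.2 hi
  rw [← mul_prod_erase univ _ (mem_univ i), ← mul_prod_erase univ (fun k => (ν k + 1) ^ 2)
    (mem_univ i), ← mul_assoc, ← mul_assoc]
  exact Nat.mul_le_mul (by nlinarith) (prod_le_prod' fun k _ => by nlinarith)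

theorem Pi.card_Iic_eq_prod_add_one {ι : Type*} [Fintype ι] [DecidableEq ι] (ν : ι → ℕ) :
    #(Iic ν) = ∏ k, (ν k + 1) := by
  simp only [Pi.card_Iic, Nat.card_Iic]

theorem monotone_prod_add_one {ι : Type*} [Fintype ι] :
    Monotone fun ν : ι → ℕ => ∏ k, (ν k + 1) :=
  fun _ _ hμν => prod_le_prod' fun k _ => Nat.add_le_add_right (hμν k) 1

/-- The hyperbolic cross `H_s = {ν : ∏_k (ν_k + 1) ≤ s}`. -/
def hyperbolicCross (d s : ℕ) : Finset (Fin d → ℕ) :=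
  (Fintype.piFinset fun _ => range s).filter fun ν => ∏ k, (ν k + 1) ≤ s

section HyperbolicCross

variable {d s : ℕ}

theorem mem_hyperbolicCross {ν : Fin d → ℕ} : ν ∈ hyperbolicCross d s ↔ ∏ k, (ν k + 1) ≤ s := by
  simp only [hyperbolicCross, mem_filter, Fintype.mem_piFinset, mem_range, and_iff_right_iff_imp]
  intro hν k
  have : ν k + 1 ≤ ∏ j, (ν j + 1) :=
    single_le_prod' (fun j _ => Nat.le_add_left 1 (ν j)) (mem_univ k)
  omega

theorem isLowerSet_hyperbolicCross : IsLowerSet (hyperbolicCross d s : Set (Fin d → ℕ)) :=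
  fun _ _ hμν hν => mem_hyperbolicCross.2 <|
    (monotone_prod_add_one hμν).trans (mem_hyperbolicCross.1 hν)

theorem Iic_subset_hyperbolicCross {ν : Fin d → ℕ} (hν : ∏ k, (ν k + 1) ≤ s) :
    Iic ν ⊆ hyperbolicCross d s := by
  simpa [← coe_Iic] using isLowerSet_hyperbolicCross.Iic_subset (mem_hyperbolicCross.2 hν)

/-- `H_s` contains the box below `(s - 1) e₀`, which has `s` elements. -/
theorem le_card_hyperbolicCross (hd : 0 < d) : s ≤ #(hyperbolicCross d s) := by
  classical
  obtain rfl | hs := Nat.eq_zero_or_pos s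
  · exact Nat.zero_le _
  set e : Fin d → ℕ := Pi.single ⟨0, hd⟩ (s - 1)
  have he : ∏ k, (e k + 1) = s := by
    rw [Fintype.prod_eq_single ⟨0, hd⟩ fun k hk => by simp [e, hk]]
    simp only [e, Pi.single_eq_same]
    omega
  calc s = #(Iic e) := by rw [Pi.card_Iic_eq_prod_add_one, he]
    _ ≤ #(hyperbolicCross d s) := card_le_card (Iic_subset_hyperbolicCross he.le)

theorem exists_isLowerSet_Iic_subset (hd : 0 < d) {ν : Fin d → ℕ} (hν : ∏ k, (ν k + 1) ≤ s) :
    ∃ Λ, Iic ν ⊆ Λ ∧ Λ ⊆ hyperbolicCross d s ∧ IsLowerSet (Λ : Set (Fin d → ℕ)) ∧ #Λ = s :=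
  exists_isLowerSet_card_eq_of_subset (by simpa using isLowerSet_Iic ν)
    isLowerSet_hyperbolicCross (Iic_subset_hyperbolicCross hν)
    (Pi.card_Iic_eq_prod_add_one ν ▸ hν) (le_card_hyperbolicCross hd)

theorem sum_prod_le_KL {Λ : Finset (Fin d → ℕ)} (hΛ : IsLowerSet (Λ : Set (Fin d → ℕ)))
    (hΛH : Λ ⊆ hyperbolicCross d s) (hcard : #Λ = s) :
    ∑ ν ∈ Λ, ∏ k, (2 * ν k + 1) ≤ KL d s := by
  refine le_csSup ⟨∑ ν ∈ hyperbolicCross d s, ∏ k, (2 * ν k + 1), ?_⟩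
    ⟨Λ, fun ν hν μ hμν => hΛ hμν hν, fun ν hν => mem_hyperbolicCross.1 (hΛH hν), hcard, rfl⟩
  rintro _ ⟨Λ', -, hΛ'H, -, rfl⟩
  exact sum_le_sum_of_subset fun ν hν => mem_hyperbolicCross.2 (hΛ'H ν hν)

end HyperbolicCross

theorem KL_ge_max_weight (d s : ℕ) (hd : 1 ≤ d) (hs : 2 ≤ s)
    (ν : Fin d → ℕ) (hν : ∏ k, (ν k + 1) ≤ s) :
    (4 / 3 : ℝ) * ∏ k, (2 * (ν k : ℝ) + 1) ≤ (KL d s : ℝ) := by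
  obtain ⟨Λ, hνΛ, hΛH, hΛ, hcard⟩ := exists_isLowerSet_Iic_subset hd hν
  have hKL := sum_prod_le_KL hΛ hΛH hcard
  rcases eq_or_ne ν 0 with rfl | hν0
  · have hsKL : s ≤ KL d s := by
      refine le_trans ?_ hKL
      simpa [hcard] using card_nsmul_le_sum Λ (fun μ => ∏ k, (2 * μ k + 1)) 1
        fun μ _ => one_le_prod' fun k _ => Nat.le_add_left 1 _
    have : (2 : ℝ) ≤ KL d s := by exact_mod_cast hs.trans hsKL
    simp only [Pi.zero_apply, Nat.cast_zero, mul_zero, zero_add, prod_const_one]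
    linarith
  · have hnat : 4 * ∏ k, (2 * ν k + 1) ≤ 3 * KL d s := calc
      4 * ∏ k, (2 * ν k + 1) ≤ 3 * ∏ k, (ν k + 1) ^ 2 := four_mul_prod_le_three_mul_prod_sq hν0
      _ = 3 * ∑ μ ∈ Iic ν, ∏ k, (2 * μ k + 1) := by rw [sum_Iic_prod_two_mul_add_one]
      _ ≤ 3 * KL d s := Nat.mul_le_mul_left 3 ((sum_le_sum_of_subset hνΛ).trans hKL)
    have : (4 : ℝ) * ∏ k, (2 * (ν k : ℝ) + 1) ≤ 3 * KL d s := by exact_mod_cast hnat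
    linarith
end

section
/- Let X_1,…,X_M be i.i.d. Bernoulli (i.e., {0,1}-valued) random variables with mean X, and let X̄ = (1/M)Σ_k X_k. Then for every 0 < μ₁ < 1, μ₂ > 0, and M ≥ 16e/(μ₁μ₂), one has ℙ(|X̄ − X| ≥ μ₁X + μ₂) ≤ exp(−Mμ₁μ₂/(16e)). -/
/-!
A Chernoff bound suffices. A `{0,1}`-valued variable with mean `p` has
`mgf t = 1 + (exp t - 1) p ≤ exp (p (exp t - 1))`, so by independence the sum `S` of `M` of them
has `mgf S t ≤ exp (M p (exp t - 1))`. Taking `t = ± μ₁` and using `exp t - 1 - t ≤ t ^ 2` for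
`|t| ≤ 1`, the relative part `μ₁ p` of the deviation absorbs the quadratic term, and each tail of
`|S - M p| ≥ M (μ₁ p + μ₂)` has probability at most `exp (-M μ₁ μ₂)`. Once `M μ₁ μ₂ ≥ 16 e`, the
factor `2` of the union bound is absorbed by weakening the exponent to `M μ₁ μ₂ / (16 e)`.
-/

open MeasureTheory ProbabilityTheory Real Finset

lemma exp_sub_one_le_add_sq {t : ℝ} (ht : |t| ≤ 1) : exp t - 1 ≤ t + t ^ 2 := by
  linarith [(le_abs_self _).trans (abs_exp_sub_one_sub_id_le ht)]

lemma two_mul_exp_neg_le_exp_neg_div {c T : ℝ} (hc : 2 ≤ c) (hT : c ≤ T) :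
    2 * exp (-T) ≤ exp (-T / c) := by
  have hgap : 1 ≤ T - T / c := by
    have : T / c ≤ T / 2 := div_le_div_of_nonneg_left (by linarith) (by norm_num) hc
    linarith
  calc 2 * exp (-T) ≤ exp (T - T / c) * exp (-T) := by
        gcongr; linarith [add_one_le_exp (T - T / c)]
    _ = exp (-T / c) := by rw [← exp_add]; ring_nf

section ZeroOne

variable {Ω : Type*} {mΩ : MeasurableSpace Ω} {μ : Measure Ω} {X : Ω → ℝ}

lemma integral_nonneg_of_ae_zero_or_one (h01 : ∀ᵐ ω ∂μ, X ω = 0 ∨ X ω = 1) : 0 ≤ μ[X] :=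
  integral_nonneg_of_ae <| h01.mono fun ω h => by rcases h with h | h <;> simp [h]

lemma integrable_of_ae_zero_or_one [IsFiniteMeasure μ] (hX : AEStronglyMeasurable X μ)
    (h01 : ∀ᵐ ω ∂μ, X ω = 0 ∨ X ω = 1) : Integrable X μ :=
  (integrable_const 1).mono' hX <| h01.mono fun ω h => by rcases h with h | h <;> simp [h]

lemma exp_mul_ae_eq_of_ae_zero_or_one (h01 : ∀ᵐ ω ∂μ, X ω = 0 ∨ X ω = 1) (t : ℝ) :
    (fun ω => exp (t * X ω)) =ᵐ[μ] fun ω => 1 + (exp t - 1) * X ω :=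
  h01.mono fun ω h => by rcases h with h | h <;> simp [h]

lemma integrable_exp_mul_of_ae_zero_or_one [IsFiniteMeasure μ] (hX : AEStronglyMeasurable X μ)
    (h01 : ∀ᵐ ω ∂μ, X ω = 0 ∨ X ω = 1) (t : ℝ) : Integrable (fun ω => exp (t * X ω)) μ :=
  ((integrable_const 1).add ((integrable_of_ae_zero_or_one hX h01).const_mul _)).congr
    (exp_mul_ae_eq_of_ae_zero_or_one h01 t).symm

lemma mgf_eq_of_ae_zero_or_one [IsProbabilityMeasure μ] (hX : AEStronglyMeasurable X μ)
    (h01 : ∀ᵐ ω ∂μ, X ω = 0 ∨ X ω = 1) (t : ℝ) : mgf X μ t = 1 + (exp t - 1) * μ[X] := by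
  rw [mgf, integral_congr_ae (exp_mul_ae_eq_of_ae_zero_or_one h01 t),
    integral_add (integrable_const 1) ((integrable_of_ae_zero_or_one hX h01).const_mul _),
    integral_const_mul, integral_const]
  simp

lemma mgf_le_exp_of_ae_zero_or_one [IsProbabilityMeasure μ] (hX : AEStronglyMeasurable X μ)
    (h01 : ∀ᵐ ω ∂μ, X ω = 0 ∨ X ω = 1) (t : ℝ) : mgf X μ t ≤ exp (μ[X] * (exp t - 1)) := by
  rw [mgf_eq_of_ae_zero_or_one hX h01]
  linarith [add_one_le_exp (μ[X] * (exp t - 1))]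

end ZeroOne

section Sum

variable {Ω ι : Type*} {mΩ : MeasurableSpace Ω} {μ : Measure Ω} [IsProbabilityMeasure μ]
  {X : ι → Ω → ℝ} {p : ℝ} (s : Finset ι)

lemma mgf_sum_le_of_ae_zero_or_one (hindep : iIndepFun X μ) (hmeas : ∀ i, Measurable (X i))
    (h01 : ∀ i, ∀ᵐ ω ∂μ, X i ω = 0 ∨ X i ω = 1) (hmean : ∀ i, μ[X i] = p) (t : ℝ) :
    mgf (∑ i ∈ s, X i) μ t ≤ exp (#s * p * (exp t - 1)) := by
  rw [hindep.mgf_sum hmeas]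
  calc ∏ i ∈ s, mgf (X i) μ t ≤ ∏ _i ∈ s, exp (p * (exp t - 1)) :=
        prod_le_prod (fun _ _ => mgf_nonneg) fun i _ =>
          hmean i ▸ mgf_le_exp_of_ae_zero_or_one (hmeas i).aestronglyMeasurable (h01 i) t
    _ = exp (#s * p * (exp t - 1)) := by rw [prod_const, ← exp_nat_mul, mul_assoc]

lemma measureReal_sum_ge_le_of_ae_zero_or_one (hindep : iIndepFun X μ)
    (hmeas : ∀ i, Measurable (X i)) (h01 : ∀ i, ∀ᵐ ω ∂μ, X i ω = 0 ∨ X i ω = 1)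
    (hmean : ∀ i, μ[X i] = p) {t : ℝ} (ht : 0 ≤ t) (a : ℝ) :
    μ.real {ω | a ≤ ∑ i ∈ s, X i ω} ≤ exp (-t * a + #s * p * (exp t - 1)) := by
  have hint := hindep.integrable_exp_mul_sum hmeas (s := s) fun i _ =>
    integrable_exp_mul_of_ae_zero_or_one (hmeas i).aestronglyMeasurable (h01 i) t
  have := measure_ge_le_exp_mul_mgf a ht hint
  simp only [Finset.sum_apply] at this
  rw [exp_add]
  exact this.trans (by gcongr; exact mgf_sum_le_of_ae_zero_or_one s hindep hmeas h01 hmean t)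

lemma measureReal_sum_le_le_of_ae_zero_or_one (hindep : iIndepFun X μ)
    (hmeas : ∀ i, Measurable (X i)) (h01 : ∀ i, ∀ᵐ ω ∂μ, X i ω = 0 ∨ X i ω = 1)
    (hmean : ∀ i, μ[X i] = p) {t : ℝ} (ht : t ≤ 0) (a : ℝ) :
    μ.real {ω | ∑ i ∈ s, X i ω ≤ a} ≤ exp (-t * a + #s * p * (exp t - 1)) := by
  have hint := hindep.integrable_exp_mul_sum hmeas (s := s) fun i _ =>
    integrable_exp_mul_of_ae_zero_or_one (hmeas i).aestronglyMeasurable (h01 i) t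
  have := measure_le_le_exp_mul_mgf a ht hint
  simp only [Finset.sum_apply] at this
  rw [exp_add]
  exact this.trans (by gcongr; exact mgf_sum_le_of_ae_zero_or_one s hindep hmeas h01 hmean t)

lemma measureReal_sum_ge_le_exp_neg_of_ae_zero_or_one (hindep : iIndepFun X μ)
    (hmeas : ∀ i, Measurable (X i)) (h01 : ∀ i, ∀ᵐ ω ∂μ, X i ω = 0 ∨ X i ω = 1)
    (hmean : ∀ i, μ[X i] = p) (hp : 0 ≤ p) {μ₁ : ℝ} (hμ₁ : 0 ≤ μ₁) (hμ₁' : μ₁ ≤ 1) (μ₂ : ℝ) :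
    μ.real {ω | #s * (p + (μ₁ * p + μ₂)) ≤ ∑ i ∈ s, X i ω} ≤ exp (-(#s * μ₁ * μ₂)) := by
  refine (measureReal_sum_ge_le_of_ae_zero_or_one s hindep hmeas h01 hmean hμ₁ _).trans
    (exp_le_exp.mpr ?_)
  have hquad := exp_sub_one_le_add_sq (abs_le.mpr ⟨by linarith, hμ₁'⟩)
  have hsp : 0 ≤ (#s : ℝ) * p := by positivity
  nlinarith [mul_le_mul_of_nonneg_left hquad hsp]

lemma measureReal_sum_le_le_exp_neg_of_ae_zero_or_one (hindep : iIndepFun X μ)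
    (hmeas : ∀ i, Measurable (X i)) (h01 : ∀ i, ∀ᵐ ω ∂μ, X i ω = 0 ∨ X i ω = 1)
    (hmean : ∀ i, μ[X i] = p) (hp : 0 ≤ p) {μ₁ : ℝ} (hμ₁ : 0 ≤ μ₁) (hμ₁' : μ₁ ≤ 1) (μ₂ : ℝ) :
    μ.real {ω | ∑ i ∈ s, X i ω ≤ #s * (p - (μ₁ * p + μ₂))} ≤ exp (-(#s * μ₁ * μ₂)) := by
  refine (measureReal_sum_le_le_of_ae_zero_or_one s hindep hmeas h01 hmean
    (neg_nonpos.mpr hμ₁) _).trans (exp_le_exp.mpr ?_)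
  have hquad := exp_sub_one_le_add_sq (t := -μ₁) (abs_le.mpr ⟨by linarith, by linarith⟩)
  have hsp : 0 ≤ (#s : ℝ) * p := by positivity
  nlinarith [mul_le_mul_of_nonneg_left hquad hsp]

lemma measureReal_abs_sum_sub_ge_le_of_ae_zero_or_one (hindep : iIndepFun X μ)
    (hmeas : ∀ i, Measurable (X i)) (h01 : ∀ i, ∀ᵐ ω ∂μ, X i ω = 0 ∨ X i ω = 1)
    (hmean : ∀ i, μ[X i] = p) (hp : 0 ≤ p) {μ₁ : ℝ} (hμ₁ : 0 ≤ μ₁) (hμ₁' : μ₁ ≤ 1) (μ₂ : ℝ) :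
    μ.real {ω | #s * (μ₁ * p + μ₂) ≤ |∑ i ∈ s, X i ω - #s * p|}
      ≤ 2 * exp (-(#s * μ₁ * μ₂)) := by
  have hsub : {ω | #s * (μ₁ * p + μ₂) ≤ |∑ i ∈ s, X i ω - #s * p|}
      ⊆ {ω | #s * (p + (μ₁ * p + μ₂)) ≤ ∑ i ∈ s, X i ω}
        ∪ {ω | ∑ i ∈ s, X i ω ≤ #s * (p - (μ₁ * p + μ₂))} := by
    intro ω hω
    simp only [Set.mem_union, Set.mem_ofPred_eq, le_abs] at hω ⊢
    exact hω.imp (fun h => by linarith) (fun h => by linarith)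
  calc _ ≤ _ := measureReal_mono hsub
    _ ≤ _ := measureReal_union_le _ _
    _ ≤ _ := by
      linarith [measureReal_sum_ge_le_exp_neg_of_ae_zero_or_one s hindep hmeas h01 hmean hp hμ₁
        hμ₁' μ₂, measureReal_sum_le_le_exp_neg_of_ae_zero_or_one s hindep hmeas h01 hmean hp hμ₁
        hμ₁' μ₂]

end Sum

theorem bernoulli_relative_tail_bound_general
    {Ω : Type*} [MeasureSpace Ω] [IsProbabilityMeasure (ℙ : Measure Ω)]
    (M : ℕ) (X : Fin M → Ω → ℝ)
    (hmeas : ∀ k, Measurable (X k))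
    (hindep : iIndepFun X ℙ)
    (hval : ∀ k, ∀ᵐ ω ∂ℙ, X k ω = 0 ∨ X k ω = 1)
    (p : ℝ) (hmean : ∀ k, ∫ ω, X k ω ∂ℙ = p)
    (μ₁ μ₂ : ℝ) (hμ₁ : 0 < μ₁) (hμ₁' : μ₁ < 1) (hμ₂ : 0 < μ₂)
    (hMbig : 16 * Real.exp 1 / (μ₁ * μ₂) ≤ (M : ℝ)) :
    (ℙ {ω | μ₁ * p + μ₂ ≤ |(M : ℝ)⁻¹ * (∑ k, X k ω) - p|}).toReal
      ≤ Real.exp (-((M : ℝ) * μ₁ * μ₂) / (16 * Real.exp 1)) := by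
  have hM : (0 : ℝ) < M := (by positivity : 0 < 16 * exp 1 / (μ₁ * μ₂)).trans_le hMbig
  have hp : 0 ≤ p := hmean ⟨0, Nat.cast_pos.mp hM⟩ ▸ integral_nonneg_of_ae_zero_or_one (hval _)
  have hT : 16 * exp 1 ≤ M * μ₁ * μ₂ := by
    rw [div_le_iff₀ (by positivity)] at hMbig
    linarith
  have hevent : {ω | μ₁ * p + μ₂ ≤ |(M : ℝ)⁻¹ * (∑ k, X k ω) - p|}
      = {ω | (M : ℝ) * (μ₁ * p + μ₂) ≤ |∑ k, X k ω - M * p|} := by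
    ext ω
    rw [Set.mem_ofPred_eq, Set.mem_ofPred_eq, ← le_inv_mul_iff₀ hM, ← abs_of_pos (inv_pos.mpr hM),
      ← abs_mul, abs_of_pos (inv_pos.mpr hM), mul_sub, inv_mul_cancel_left₀ hM.ne']
  have htwo_sided := measureReal_abs_sum_sub_ge_le_of_ae_zero_or_one univ hindep hmeas hval hmean
    hp hμ₁.le hμ₁'.le μ₂
  rw [card_univ, Fintype.card_fin] at htwo_sided
  rw [← measureReal_def, hevent]
  exact htwo_sided.trans
    (two_mul_exp_neg_le_exp_neg_div (by linarith [add_one_le_exp 1, exp_pos 1]) hT)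

theorem bernoulli_relative_tail_bound
    {Ω : Type*} [MeasureSpace Ω] [IsProbabilityMeasure (ℙ : Measure Ω)]
    (M : ℕ) (hM : 0 < M) (X : Fin M → Ω → ℝ)
    (hmeas : ∀ k, Measurable (X k))
    (hindep : iIndepFun X ℙ)
    (hident : ∀ k, IdentDistrib (X k) (X ⟨0, hM⟩) ℙ ℙ)
    (hval : ∀ k, ∀ᵐ ω ∂ℙ, X k ω = 0 ∨ X k ω = 1)
    (p : ℝ) (hmean : ∀ k, ∫ ω, X k ω ∂ℙ = p)
    (μ₁ μ₂ : ℝ) (hμ₁ : 0 < μ₁) (hμ₁' : μ₁ < 1) (hμ₂ : 0 < μ₂)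
    (hMbig : 16 * Real.exp 1 / (μ₁ * μ₂) ≤ (M : ℝ)) :
    (ℙ {ω | μ₁ * p + μ₂ ≤ |(M : ℝ)⁻¹ * (∑ k, X k ω) - p|}).toReal
      ≤ Real.exp (-((M : ℝ) * μ₁ * μ₂) / (16 * Real.exp 1)) :=
  bernoulli_relative_tail_bound_general M X hmeas hindep hval p hmean μ₁ μ₂ hμ₁ hμ₁' hμ₂ hMbig
end

section
/- Let A ∈ ℂ^{m×N}. Suppose that for all z ∈ ℂ^N with supp(z) contained in some admissible support class, (1−δ)‖z‖₂² ≤ ‖Az‖₂² ≤ (1+δ)‖z‖₂², with 0 < δ < 1/2. Let c be supported on an admissible set Λ*, let ξ ∈ ℂ^m, and let g̃ = Ac + ξ/√m. Define the iteration c^{n+1} = H(c^n + A*(g̃ − Ac^n)), where H(z) is a best approximation of z among vectors supported on admissible sets, and assume all unions supp(c^n) ∪ supp(c^{n+1}) ∪ Λ* are admissible. Then ‖c^n − c‖₂ ≤ (2δ)^n‖c^0 − c‖₂ + (2√(1+δ)/((1−2δ)√m))‖ξ‖₂. -/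
/-!
Since `c` is itself admissible, the best approximation `cⁿ⁺¹` of `vⁿ = cⁿ + A*(g̃ - Acⁿ)` is at
least as close to `vⁿ` as `c`, which gives `‖cⁿ⁺¹ - c‖² ≤ 2 Re ⟪vⁿ - c, cⁿ⁺¹ - c⟫`. Here
`vⁿ - c = (Id - A*A)(cⁿ - c) + A*ξ/√m`, and all vectors involved are supported on
`supp cⁿ ∪ supp cⁿ⁺¹ ∪ Λ*`, where the polarized restricted isometry property bounds the first term
by `δ ‖cⁿ - c‖ ‖cⁿ⁺¹ - c‖` and the upper isometry bound controls the noise term. Dividing by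
`‖cⁿ⁺¹ - c‖` gives the contraction `‖cⁿ⁺¹ - c‖ ≤ 2δ ‖cⁿ - c‖ + 2√(1+δ) ‖ξ‖/√m`, which iterates
to the claim as a geometric series with ratio `2δ < 1`.
-/

open Function RCLike
open scoped InnerProductSpace

def EuclideanSpace.supportedIn (𝕜 : Type*) [RCLike 𝕜] {ι : Type*} (S : Set ι) :
    Submodule 𝕜 (EuclideanSpace 𝕜 ι) where
  carrier := {z | support z ⊆ S}
  add_mem' {x y} hx hy := (support_add x.ofLp y.ofLp).trans (Set.union_subset hx hy)
  zero_mem' := by simp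
  smul_mem' a z hz := (support_const_smul_subset a z.ofLp).trans hz

theorem norm_sub_sq_le_two_mul_re_inner_of_norm_sub_le {𝕜 E : Type*} [RCLike 𝕜]
    [NormedAddCommGroup E] [InnerProductSpace 𝕜 E] {v c c' : E} (h : ‖v - c'‖ ≤ ‖v - c‖) :
    ‖c' - c‖ ^ 2 ≤ 2 * re ⟪v - c, c' - c⟫_𝕜 := by
  have hsq := pow_le_pow_left₀ (norm_nonneg _) h 2
  rw [show v - c' = (v - c) - (c' - c) by abel, norm_sub_sq (𝕜 := 𝕜)] at hsq
  linarith

section RestrictedIsometry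

variable {𝕜 E F : Type*} [RCLike 𝕜] [NormedAddCommGroup E] [InnerProductSpace 𝕜 E]
  [NormedAddCommGroup F] [InnerProductSpace 𝕜 F]

def IsRestrictedIsometryOn (A : E →L[𝕜] F) (V : Submodule 𝕜 E) (δ : ℝ) : Prop :=
  ∀ z ∈ V, (1 - δ) * ‖z‖ ^ 2 ≤ ‖A z‖ ^ 2 ∧ ‖A z‖ ^ 2 ≤ (1 + δ) * ‖z‖ ^ 2

variable {A : E →L[𝕜] F} {V : Submodule 𝕜 E} {δ : ℝ}

open ContinuousLinearMap

namespace IsRestrictedIsometryOn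

theorem norm_map_le (hA : IsRestrictedIsometryOn A V δ) {z : E} (hz : z ∈ V) :
    ‖A z‖ ≤ √(1 + δ) * ‖z‖ := by
  rw [← Real.sqrt_sq (norm_nonneg (A z)), ← Real.sqrt_sq (norm_nonneg z), ← Real.sqrt_mul']
  · exact Real.sqrt_le_sqrt (hA z hz).2
  · positivity

theorem re_inner_sub_re_inner_map_le_half (hA : IsRestrictedIsometryOn A V δ) {x y : E}
    (hx : x ∈ V) (hy : y ∈ V) :
    re ⟪x, y⟫_𝕜 - re ⟪A x, A y⟫_𝕜 ≤ δ * (‖x‖ ^ 2 + ‖y‖ ^ 2) / 2 := by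
  have lower := (hA (x + y) (V.add_mem hx hy)).1
  have upper := (hA (x - y) (V.sub_mem hx hy)).2
  rw [map_add, norm_add_sq (𝕜 := 𝕜), norm_add_sq (𝕜 := 𝕜)] at lower
  rw [map_sub, norm_sub_sq (𝕜 := 𝕜), norm_sub_sq (𝕜 := 𝕜)] at upper
  linarith

theorem re_inner_sub_re_inner_map_le (hA : IsRestrictedIsometryOn A V δ) {x y : E}
    (hx : x ∈ V) (hy : y ∈ V) :
    re ⟪x, y⟫_𝕜 - re ⟪A x, A y⟫_𝕜 ≤ δ * (‖x‖ * ‖y‖) := by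
  rcases (mul_nonneg (norm_nonneg x) (norm_nonneg y)).eq_or_lt with hxy | hxy
  · rcases mul_eq_zero.mp hxy.symm with h | h <;> simp [norm_eq_zero.mp h]
  · -- rescaling `x` and `y` to equal norms makes the bound of the `_half` version sharp
    have h := hA.re_inner_sub_re_inner_map_le_half
      (V.smul_mem (‖y‖ : 𝕜) hx) (V.smul_mem (‖x‖ : 𝕜) hy)
    simp only [map_smul, inner_smul_left, inner_smul_right, norm_smul, conj_ofReal, ← mul_assoc,
      ← ofReal_mul, re_ofReal_mul, norm_ofReal, abs_norm] at h
    refine le_of_mul_le_mul_left ?_ hxy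
    nlinarith

theorem norm_sub_le_of_iht_step [CompleteSpace E] [CompleteSpace F]
    (hA : IsRestrictedIsometryOn A V δ) (hδ : 0 ≤ δ) {c x x' : E} {e : F}
    (hx : x - c ∈ V) (hx' : x' - c ∈ V)
    (hbest : ‖x + adjoint A (A c + e - A x) - x'‖ ≤ ‖x + adjoint A (A c + e - A x) - c‖) :
    ‖x' - c‖ ≤ 2 * δ * ‖x - c‖ + 2 * √(1 + δ) * ‖e‖ := by
  have hproj := norm_sub_sq_le_two_mul_re_inner_of_norm_sub_le (𝕜 := 𝕜) hbest
  have hdecomp :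
      x + adjoint A (A c + e - A x) - c = (x - c) - adjoint A (A (x - c)) + adjoint A e := by
    simp only [map_sub, map_add]
    abel
  rw [hdecomp, inner_add_left, inner_sub_left, map_add, map_sub, adjoint_inner_left,
    adjoint_inner_left] at hproj
  have hRIP := hA.re_inner_sub_re_inner_map_le hx hx'
  have hnoise : re ⟪e, A (x' - c)⟫_𝕜 ≤ ‖e‖ * (√(1 + δ) * ‖x' - c‖) :=
    (re_inner_le_norm _ _).trans (by gcongr; exact hA.norm_map_le hx')
  have hquad : ‖x' - c‖ ^ 2 ≤ (2 * δ * ‖x - c‖ + 2 * √(1 + δ) * ‖e‖) * ‖x' - c‖ := by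
    linarith
  have hbound : 0 ≤ 2 * δ * ‖x - c‖ + 2 * √(1 + δ) * ‖e‖ := by positivity
  nlinarith [norm_nonneg (x' - c)]

end IsRestrictedIsometryOn
end RestrictedIsometry

theorem le_pow_mul_add_div_of_le_mul_add {u : ℕ → ℝ} {ρ K : ℝ} (hρ : 0 ≤ ρ) (hρ1 : ρ < 1)
    (hK : 0 ≤ K) (h : ∀ n, u (n + 1) ≤ ρ * u n + K) (n : ℕ) :
    u n ≤ ρ ^ n * u 0 + K / (1 - ρ) := by
  have hfix : ρ * (K / (1 - ρ)) + K = K / (1 - ρ) := by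
    field_simp [(sub_pos.mpr hρ1).ne']
    ring
  induction n with
  | zero => simpa using div_nonneg hK (sub_pos.mpr hρ1).le
  | succ n ih =>
    calc u (n + 1) ≤ ρ * u n + K := h n
      _ ≤ ρ * (ρ ^ n * u 0 + K / (1 - ρ)) + K := by gcongr
      _ = ρ ^ (n + 1) * u 0 + K / (1 - ρ) := by
        rw [mul_add, ← mul_assoc, ← pow_succ', add_assoc, hfix]

theorem iterative_hard_thresholding_convergence_general
    (m N : ℕ)
    (A : EuclideanSpace ℂ (Fin N) →L[ℂ] EuclideanSpace ℂ (Fin m))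
    (𝒜 : Set (Set (Fin N))) (δ : ℝ) (hδ0 : 0 < δ) (hδ : δ < 1 / 2)
    (hRIP : ∀ S ∈ 𝒜, ∀ z : EuclideanSpace ℂ (Fin N), Function.support z ⊆ S →
      (1 - δ) * ‖z‖ ^ 2 ≤ ‖A z‖ ^ 2 ∧ ‖A z‖ ^ 2 ≤ (1 + δ) * ‖z‖ ^ 2)
    (c : EuclideanSpace ℂ (Fin N)) (Λstar : Set (Fin N)) (hΛ : Λstar ∈ 𝒜)
    (hsuppc : Function.support c ⊆ Λstar)
    (ξ : EuclideanSpace ℂ (Fin m))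
    (g : EuclideanSpace ℂ (Fin m))
    (hg : g = A c + ((Real.sqrt m : ℂ))⁻¹ • ξ)
    (cseq : ℕ → EuclideanSpace ℂ (Fin N))
    (hunion : ∀ n, Function.support (cseq n) ∪ Function.support (cseq (n + 1)) ∪ Λstar ∈ 𝒜)
    (hbest : ∀ n, ∀ w : EuclideanSpace ℂ (Fin N),
      (∃ S ∈ 𝒜, Function.support w ⊆ S) →
        ‖(cseq n + ContinuousLinearMap.adjoint A (g - A (cseq n))) - cseq (n + 1)‖
          ≤ ‖(cseq n + ContinuousLinearMap.adjoint A (g - A (cseq n))) - w‖) :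
    ∀ n, ‖cseq n - c‖ ≤ (2 * δ) ^ n * ‖cseq 0 - c‖
      + (2 * Real.sqrt (1 + δ) / ((1 - 2 * δ) * Real.sqrt m)) * ‖ξ‖ := by
  subst hg
  have hstep (n : ℕ) : ‖cseq (n + 1) - c‖
      ≤ 2 * δ * ‖cseq n - c‖ + 2 * Real.sqrt (1 + δ) * ‖((Real.sqrt m : ℂ))⁻¹ • ξ‖ := by
    let V := EuclideanSpace.supportedIn ℂ
      (Function.support (cseq n) ∪ Function.support (cseq (n + 1)) ∪ Λstar)
    have hA : IsRestrictedIsometryOn A V δ := hRIP _ (hunion n)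
    have hc : c ∈ V := hsuppc.trans Set.subset_union_right
    have hcur : cseq n ∈ V := Set.subset_union_left.trans Set.subset_union_left
    have hnext : cseq (n + 1) ∈ V := Set.subset_union_right.trans Set.subset_union_left
    exact hA.norm_sub_le_of_iht_step hδ0.le (V.sub_mem hcur hc) (V.sub_mem hnext hc)
      (hbest n c ⟨Λstar, hΛ, hsuppc⟩)
  have hnoise : ‖((Real.sqrt m : ℂ))⁻¹ • ξ‖ = (Real.sqrt m)⁻¹ * ‖ξ‖ := by
    rw [norm_smul, norm_inv, Complex.norm_real, Real.norm_of_nonneg (Real.sqrt_nonneg _)]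
  intro n
  calc ‖cseq n - c‖
      ≤ (2 * δ) ^ n * ‖cseq 0 - c‖
        + 2 * Real.sqrt (1 + δ) * ‖((Real.sqrt m : ℂ))⁻¹ • ξ‖ / (1 - 2 * δ) :=
        le_pow_mul_add_div_of_le_mul_add (u := fun k ↦ ‖cseq k - c‖)
          (by positivity) (by linarith) (by positivity) hstep n
    _ = _ := by
      rw [hnoise]
      simp only [div_eq_mul_inv, mul_inv]
      ring

theorem iterative_hard_thresholding_convergence
    (m N : ℕ) (hm : 0 < m)
    (A : EuclideanSpace ℂ (Fin N) →L[ℂ] EuclideanSpace ℂ (Fin m))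
    (𝒜 : Set (Set (Fin N))) (δ : ℝ) (hδ0 : 0 < δ) (hδ : δ < 1 / 2)
    (hRIP : ∀ S ∈ 𝒜, ∀ z : EuclideanSpace ℂ (Fin N), Function.support z ⊆ S →
      (1 - δ) * ‖z‖ ^ 2 ≤ ‖A z‖ ^ 2 ∧ ‖A z‖ ^ 2 ≤ (1 + δ) * ‖z‖ ^ 2)
    (c : EuclideanSpace ℂ (Fin N)) (Λstar : Set (Fin N)) (hΛ : Λstar ∈ 𝒜)
    (hsuppc : Function.support c ⊆ Λstar)
    (ξ : EuclideanSpace ℂ (Fin m))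
    (g : EuclideanSpace ℂ (Fin m))
    (hg : g = A c + ((Real.sqrt m : ℂ))⁻¹ • ξ)
    (cseq : ℕ → EuclideanSpace ℂ (Fin N))
    (hadm : ∀ n, ∃ S ∈ 𝒜, Function.support (cseq n) ⊆ S)
    (hunion : ∀ n, Function.support (cseq n) ∪ Function.support (cseq (n + 1)) ∪ Λstar ∈ 𝒜)
    (hbest : ∀ n, ∀ w : EuclideanSpace ℂ (Fin N),
      (∃ S ∈ 𝒜, Function.support w ⊆ S) →
        ‖(cseq n + ContinuousLinearMap.adjoint A (g - A (cseq n))) - cseq (n + 1)‖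
          ≤ ‖(cseq n + ContinuousLinearMap.adjoint A (g - A (cseq n))) - w‖) :
    ∀ n, ‖cseq n - c‖ ≤ (2 * δ) ^ n * ‖cseq 0 - c‖
      + (2 * Real.sqrt (1 + δ) / ((1 - 2 * δ) * Real.sqrt m)) * ‖ξ‖ :=
  iterative_hard_thresholding_convergence_general m N A 𝒜 δ hδ0 hδ hRIP c Λstar hΛ hsuppc ξ g hg
    cseq hunion hbest
end
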